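/- arXiv:2112.04265 — 9 statements merged into one kernel-verified Lean document; each statement's English description precedes it below -/
import Mathlib

section
/- For every integer s ≥ 1 and every integer t ≥ 1, the variable windmill C_3^t C_4^s is graceful when t ≡ 0 or 1 (mod 4), and near graceful when t ≡ 2 or 3 (mod 4). -/
/-- The vertex type of a windmill whose vanes are cycles of lengths given by the list `L`:
`none` is the central vertex, and `some ⟨i, j⟩` is the `j`-th non-central vertex of the
`i`-th vane (a cycle of length `L.get i`, contributing `L.get i - 1` non-central vertices). -/
abbrev WindmillVertex (L : List ℕ) : Type :=
  Option (Σ i : Fin L.length, Fin (L.get i - 1))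

/-- Base relation for the windmill graph: the central vertex is joined to the two ends of
each vane's path, and consecutive vertices along each vane's path are joined. -/
def windmillRel (L : List ℕ) : WindmillVertex L → WindmillVertex L → Prop
  | none, some ⟨i, j⟩ => j.val = 0 ∨ j.val + 2 = L.get i
  | some ⟨i, j⟩, some ⟨i', j'⟩ => i.val = i'.val ∧ j'.val = j.val + 1
  | _, _ => False

/-- The windmill graph with vanes of cycle lengths given by `L`, all sharing one central
vertex.  `Windmill (List.replicate t n)` is `Cₙᵗ`. -/
def Windmill (L : List ℕ) : SimpleGraph (WindmillVertex L) :=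
  SimpleGraph.fromRel (windmillRel L)

/-- The edge label induced by a vertex labelling `f`: the absolute difference of the labels
of the two endpoints. -/
def edgeLabel {V : Type*} (f : V → ℕ) : Sym2 V → ℕ :=
  Sym2.lift ⟨fun u v => ((f u : ℤ) - (f v : ℤ)).natAbs,
    fun u v => by dsimp only; omega⟩

/-- `f` is a graceful labelling of the graph `G` with `m` edges: `f` is an injective map
into `{0, …, m}` and the induced edge labelling is a bijection onto `{1, …, m}`. -/
def IsGracefulLabelling {V : Type*} (G : SimpleGraph V) (m : ℕ) (f : V → ℕ) : Prop :=
  Function.Injective f ∧ (∀ v, f v ≤ m) ∧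
    Set.BijOn (edgeLabel f) G.edgeSet (Set.Icc 1 m)

/-- The graph `G`, with `m` edges, is graceful. -/
def IsGraceful {V : Type*} (G : SimpleGraph V) (m : ℕ) : Prop :=
  ∃ f, IsGracefulLabelling G m f

/-- `f` is a near graceful labelling of the graph `G` with `m` edges: `f` is an injective
map into `{0, …, m+1}` and the induced edge labelling is a bijection onto either
`{1, …, m}` or `{1, …, m-1, m+1}`. -/
def IsNearGracefulLabelling {V : Type*} (G : SimpleGraph V) (m : ℕ) (f : V → ℕ) : Prop :=
  Function.Injective f ∧ (∀ v, f v ≤ m + 1) ∧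
    (Set.BijOn (edgeLabel f) G.edgeSet (Set.Icc 1 m) ∨
      Set.BijOn (edgeLabel f) G.edgeSet (Set.Icc 1 (m - 1) ∪ {m + 1}))

/-- The graph `G`, with `m` edges, is near graceful. -/
def IsNearGraceful {V : Type*} (G : SimpleGraph V) (m : ℕ) : Prop :=
  ∃ f, IsNearGracefulLabelling G m f

/-!
Label the centre `0` and put `X = t + 4s`. The `k`-th triangle gets the labels `X + a k` and
`X + a k + k`, so that its edges receive `k`, `X + a k` and `X + a k + k`: if the pairs
`(a k, a k + k)` partition `{1, …, 2t}` (a Skolem sequence, which exists for `t ≡ 0, 1 mod 4`),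
the triangles use up the labels `1, …, t` and `X + 1, …, X + 2t`; if they partition
`{1, …, 2t - 1, 2t + 1}` (a hooked Skolem sequence, for `t ≡ 2, 3 mod 4`), the label `X + 2t` is
replaced by `X + 2t + 1`. The squares take the remaining labels `t + 1, …, X` in consecutive
pairs `t + 2c + 1, t + 2c + 2`: the outer vertices of a square carry one such pair, which its
spokes inherit, and its middle vertex sits at distance `t + 2d + 1` from one of them and
`t + 2d + 2` from the other, where the indices `c` and `d` of all squares together run through
`0, …, 2s - 1` exactly once.
-/

theorem List.get_replicate_append_replicate {α : Type*} {m n : ℕ} (x y : α)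
    (i : Fin (List.replicate m x ++ List.replicate n y).length) :
    (List.replicate m x ++ List.replicate n y).get i = if (i : ℕ) < m then x else y := by
  simp only [List.get_eq_getElem, List.getElem_append, List.length_replicate,
    List.getElem_replicate, dite_eq_ite]

theorem List.val_lt_of_replicate_append_replicate {α : Type*} {m n : ℕ} {x y : α}
    (i : Fin (List.replicate m x ++ List.replicate n y).length) : (i : ℕ) < m + n := by
  simpa using i.isLt

theorem Set.Icc_union_image_const_add_Icc (m n : ℕ) :
    Set.Icc 1 m ∪ (m + ·) '' ↑(Finset.Icc 1 n) = Set.Icc 1 (m + n) := by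
  ext x
  simp only [Set.mem_union, Set.mem_Icc, Set.mem_image, Finset.coe_Icc]
  constructor
  · rintro (h | ⟨y, hy, rfl⟩) <;> omega
  · intro h
    by_cases hx : x ≤ m
    · exact Or.inl ⟨h.1, hx⟩
    · exact Or.inr ⟨x - m, by omega, by omega⟩

theorem Set.Icc_union_image_const_add_insert_Icc (m : ℕ) {n : ℕ} (hn : 1 ≤ n) :
    Set.Icc 1 m ∪ (m + ·) '' ↑(insert (n + 1) (Finset.Icc 1 (n - 1))) =
      Set.Icc 1 (m + n - 1) ∪ {m + n + 1} := by
  ext x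
  simp only [Set.mem_union, Set.mem_Icc, Set.mem_image, Finset.coe_insert, Finset.coe_Icc,
    Set.mem_insert_iff, Set.mem_singleton_iff]
  constructor
  · rintro (h | ⟨y, hy, rfl⟩) <;> omega
  · rintro (h | rfl)
    · by_cases hx : x ≤ m
      · exact Or.inl ⟨h.1, hx⟩
      · exact Or.inr ⟨x - m, Or.inr (by omega), by omega⟩
    · exact Or.inr ⟨n + 1, Or.inl rfl, by omega⟩

namespace Windmill

variable {L : List ℕ}

/-- Position `p` of vane `i`, read along the cycle: positions `0` and `L.get i` are the centre. -/
def vanePos (i : Fin L.length) (p : ℕ) : WindmillVertex L :=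
  if h : 0 < p ∧ p < L.get i then some ⟨i, ⟨p - 1, by omega⟩⟩ else none

def vaneEdge (i : Fin L.length) (k : ℕ) : Sym2 (WindmillVertex L) :=
  s(vanePos i k, vanePos i (k + 1))

theorem vanePos_zero (i : Fin L.length) : vanePos i 0 = none := by
  simp [vanePos]

theorem vanePos_length (i : Fin L.length) : vanePos i (L.get i) = none := by
  simp [vanePos]

theorem vanePos_succ (i : Fin L.length) (j : Fin (L.get i - 1)) :
    vanePos i (j + 1) = some ⟨i, j⟩ := by
  rw [vanePos, dif_pos (by omega)]
  rfl

theorem vaneEdge_mem_edgeSet {i : Fin L.length} {k : ℕ} (hi : 2 ≤ L.get i) (hk : k < L.get i) :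
    vaneEdge i k ∈ (Windmill L).edgeSet := by
  rw [vaneEdge, SimpleGraph.mem_edgeSet, Windmill, SimpleGraph.fromRel_adj]
  unfold vanePos
  simp only [List.get_eq_getElem] at *
  split_ifs <;> simp [windmillRel] <;> omega

theorem exists_vaneEdge_eq_of_windmillRel {v w : WindmillVertex L} (h : windmillRel L v w) :
    ∃ i, ∃ k < L.get i, vaneEdge i k = s(v, w) := by
  rcases v with _ | ⟨i, j⟩ <;> rcases w with _ | ⟨i', j'⟩ <;> simp only [windmillRel] at h
  · rcases h with h | h
    · refine ⟨i', 0, by omega, ?_⟩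
      rw [vaneEdge, vanePos_zero, show 0 + 1 = (j' : ℕ) + 1 by omega, vanePos_succ]
    · refine ⟨i', j' + 1, by omega, ?_⟩
      rw [vaneEdge, vanePos_succ, add_assoc, one_add_one_eq_two, h, vanePos_length, Sym2.eq_swap]
  · obtain ⟨hi, hj⟩ := h
    obtain rfl : i = i' := Fin.ext hi
    refine ⟨i, j + 1, by omega, ?_⟩
    rw [vaneEdge, vanePos_succ, ← hj, vanePos_succ]

theorem exists_vaneEdge_eq {e : Sym2 (WindmillVertex L)} (he : e ∈ (Windmill L).edgeSet) :
    ∃ i, ∃ k < L.get i, vaneEdge i k = e := by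
  induction e using Sym2.ind with
  | _ v w =>
  rw [SimpleGraph.mem_edgeSet, Windmill, SimpleGraph.fromRel_adj] at he
  obtain ⟨-, h | h⟩ := he
  · exact exists_vaneEdge_eq_of_windmillRel h
  · rw [Sym2.eq_swap]
    exact exists_vaneEdge_eq_of_windmillRel h

def labelling (g : ℕ → ℕ → ℕ) : WindmillVertex L → ℕ
  | none => 0
  | some x => g x.1 (x.2 + 1)

def vaneEdgeLabel (g : ℕ → ℕ → ℕ) (i k : ℕ) : ℕ := ((g i k : ℤ) - g i (k + 1)).natAbs

variable {g : ℕ → ℕ → ℕ}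

theorem labelling_vanePos {i : Fin L.length} (hg : g i 0 = 0 ∧ g i (L.get i) = 0) {p : ℕ}
    (hp : p ≤ L.get i) : labelling g (vanePos i p) = g i p := by
  unfold vanePos
  split_ifs with h
  · simp only [labelling]
    congr 1
    omega
  · obtain rfl | rfl : p = 0 ∨ p = L.get i := by omega
    exacts [hg.1.symm, hg.2.symm]

theorem edgeLabel_vaneEdge {i : Fin L.length} (hg : g i 0 = 0 ∧ g i (L.get i) = 0) {k : ℕ}
    (hk : k < L.get i) : edgeLabel (labelling g) (vaneEdge i k) = vaneEdgeLabel g i k := by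
  simp only [vaneEdge, edgeLabel, Sym2.lift_mk]
  rw [labelling_vanePos hg hk.le, labelling_vanePos hg hk, vaneEdgeLabel]

theorem labelling_injective
    (hpos : ∀ i : Fin L.length, ∀ p, 0 < p → p < L.get i → 0 < g i p)
    (hinj : ∀ i i' : Fin L.length, ∀ p p', 0 < p → p < L.get i → 0 < p' → p' < L.get i' →
      g i p = g i' p' → i = i' ∧ p = p') :
    Function.Injective (labelling (L := L) g) := by
  rintro (_ | ⟨i, j⟩) (_ | ⟨i', j'⟩) h <;> simp only [labelling] at h
  · rfl
  · have := hpos i' (j' + 1) (by omega) (by omega)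
    omega
  · have := hpos i (j + 1) (by omega) (by omega)
    omega
  · obtain ⟨rfl, hj⟩ := hinj i i' (j + 1) (j' + 1) (by omega) (by omega) (by omega) (by omega) h
    obtain rfl : j = j' := Fin.ext (by omega)
    rfl

theorem bijOn_edgeLabel_labelling {S : Set ℕ} (hL : ∀ i, 2 ≤ L.get i)
    (hg : ∀ i : Fin L.length, g i 0 = 0 ∧ g i (L.get i) = 0)
    (hmaps : ∀ i : Fin L.length, ∀ k < L.get i, vaneEdgeLabel g i k ∈ S)
    (hinj : ∀ i i' : Fin L.length, ∀ k k', k < L.get i → k' < L.get i' →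
      vaneEdgeLabel g i k = vaneEdgeLabel g i' k' → i = i' ∧ k = k')
    (hsurj : ∀ n ∈ S, ∃ i : Fin L.length, ∃ k < L.get i, vaneEdgeLabel g i k = n) :
    Set.BijOn (edgeLabel (labelling g)) (Windmill L).edgeSet S := by
  refine ⟨?_, ?_, ?_⟩
  · intro e he
    obtain ⟨i, k, hk, rfl⟩ := exists_vaneEdge_eq he
    rw [edgeLabel_vaneEdge (hg i) hk]
    exact hmaps i k hk
  · intro e he e' he' h
    obtain ⟨i, k, hk, rfl⟩ := exists_vaneEdge_eq he
    obtain ⟨i', k', hk', rfl⟩ := exists_vaneEdge_eq he'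
    rw [edgeLabel_vaneEdge (hg i) hk, edgeLabel_vaneEdge (hg i') hk'] at h
    obtain ⟨rfl, rfl⟩ := hinj i i' k k' hk hk' h
    rfl
  · intro n hn
    obtain ⟨i, k, hk, rfl⟩ := hsurj n hn
    exact ⟨vaneEdge i k, vaneEdge_mem_edgeSet (hL i) hk, edgeLabel_vaneEdge (hg i) hk⟩

end Windmill

/-- The pairs `(a k, a k + k)`, `1 ≤ k ≤ t`, partition `T`: for `T = {1, …, 2t}` this is a Skolem
sequence of order `t`, for `T = {1, …, 2t - 1, 2t + 1}` a hooked one. -/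
def IsSkolemPairing (t : ℕ) (T : Finset ℕ) (a : ℕ → ℕ) : Prop :=
  Set.BijOn (fun x : ℕ × ℕ => a x.1 + x.2 * x.1) ↑(Finset.Icc 1 t ×ˢ Finset.range 2) ↑T

namespace IsSkolemPairing

variable {t : ℕ} {T : Finset ℕ} {a : ℕ → ℕ}

theorem of_injective (hmaps : ∀ k e, 1 ≤ k → k ≤ t → e < 2 → a k + e * k ∈ T)
    (hinj : ∀ k k' e e', 1 ≤ k → k ≤ t → 1 ≤ k' → k' ≤ t → e < 2 → e' < 2 →
      a k + e * k = a k' + e' * k' → k = k' ∧ e = e')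
    (hcard : T.card ≤ 2 * t) : IsSkolemPairing t T a := by
  have hmaps' : Set.MapsTo (fun x : ℕ × ℕ => a x.1 + x.2 * x.1)
      ↑(Finset.Icc 1 t ×ˢ Finset.range 2) ↑T := by
    rintro ⟨k, e⟩ hx
    simp only [Finset.coe_product, Set.mem_prod, Finset.coe_Icc, Set.mem_Icc, Finset.coe_range,
      Set.mem_Iio] at hx
    exact hmaps k e hx.1.1 hx.1.2 hx.2
  have hinj' : Set.InjOn (fun x : ℕ × ℕ => a x.1 + x.2 * x.1)
      ↑(Finset.Icc 1 t ×ˢ Finset.range 2) := by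
    rintro ⟨k, e⟩ hx ⟨k', e'⟩ hx' h
    simp only [Finset.coe_product, Set.mem_prod, Finset.coe_Icc, Set.mem_Icc, Finset.coe_range,
      Set.mem_Iio] at hx hx'
    obtain ⟨rfl, rfl⟩ := hinj k k' e e' hx.1.1 hx.1.2 hx'.1.1 hx'.1.2 hx.2 hx'.2 h
    rfl
  refine ⟨hmaps', hinj', Finset.surjOn_of_injOn_of_card_le _ hmaps' hinj' ?_⟩
  simpa [mul_comm] using hcard

theorem mem (ha : IsSkolemPairing t T a) {k e : ℕ} (hk : 1 ≤ k) (hkt : k ≤ t) (he : e < 2) :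
    a k + e * k ∈ T :=
  ha.mapsTo (by simp [hk, hkt, he] : (k, e) ∈ (↑(Finset.Icc 1 t ×ˢ Finset.range 2) : Set (ℕ × ℕ)))

theorem inj (ha : IsSkolemPairing t T a) {k k' e e' : ℕ} (hk : 1 ≤ k) (hkt : k ≤ t) (he : e < 2)
    (hk' : 1 ≤ k') (hkt' : k' ≤ t) (he' : e' < 2) (h : a k + e * k = a k' + e' * k') :
    k = k' ∧ e = e' := by
  simpa using ha.injOn
    (by simp [hk, hkt, he] : (k, e) ∈ (↑(Finset.Icc 1 t ×ˢ Finset.range 2) : Set (ℕ × ℕ)))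
    (by simp [hk', hkt', he'] : (k', e') ∈ (↑(Finset.Icc 1 t ×ˢ Finset.range 2) : Set (ℕ × ℕ))) h

theorem exists_eq (ha : IsSkolemPairing t T a) {x : ℕ} (hx : x ∈ T) :
    ∃ k e, 1 ≤ k ∧ k ≤ t ∧ e < 2 ∧ a k + e * k = x := by
  obtain ⟨⟨k, e⟩, hke, rfl⟩ := ha.surjOn hx
  simp only [Finset.coe_product, Set.mem_prod, Finset.coe_Icc, Set.mem_Icc, Finset.coe_range,
    Set.mem_Iio] at hke
  exact ⟨k, e, hke.1.1, hke.1.2, hke.2, rfl⟩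

end IsSkolemPairing

/- Apart from two exceptional pairs, each of the four sequences below consists of blocks of nested
pairs `(x - r, y + r)`, whose differences run through arithmetic progressions of step `2`. -/

def skolemSeqFourMul (n k : ℕ) : ℕ :=
  if k = 2 * n then 1
  else if k = 4 * n - 1 then n + 1
  else if k % 2 = 1 ∧ k < 2 * n ∨ k % 2 = 0 ∧ 2 * n < k then 6 * n - k / 2
  else 2 * n + 1 - (k + 1) / 2

def skolemSeqFourMulAddOne (n k : ℕ) : ℕ :=
  if k = 2 * n + 1 then 6 * n + 1
  else if k = 4 * n then n
  else if k % 2 = 1 ∧ k < 2 * n ∨ k % 2 = 0 ∧ 2 * n < k then 2 * n - k / 2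
  else 6 * n + 1 - (k + 1) / 2

def hookedSkolemSeqFourMulAddTwo (n k : ℕ) : ℕ :=
  if k = 2 * n + 2 then 6 * n + 3
  else if k % 2 = 1 ∧ k ≤ 2 * n + 1 ∨ k % 2 = 0 ∧ 2 * n < k then 2 * n + 2 - (k + 1) / 2
  else if k = 4 * n + 1 then 3 * n + 3
  else 6 * n + 3 - k / 2

def hookedSkolemSeqFourMulAddThree (n k : ℕ) : ℕ :=
  if k = 2 * n + 2 then 6 * n + 5
  else if k = 4 * n + 3 then n + 1
  else if k % 2 = 1 ∧ k ≤ 2 * n + 1 ∨ k % 2 = 0 ∧ 2 * n < k then 2 * n + 2 - k / 2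
  else 6 * n + 5 - (k + 1) / 2

theorem isSkolemPairing_skolemSeqFourMul (n : ℕ) :
    IsSkolemPairing (4 * n) (Finset.Icc 1 (2 * (4 * n))) (skolemSeqFourMul n) := by
  refine .of_injective (fun k e hk hkt he => ?_)
    (fun k k' e e' hk hkt hk' hkt' he he' h => ?_) (by simp)
  · rw [Finset.mem_Icc]
    interval_cases e <;> unfold skolemSeqFourMul <;> split_ifs <;> omega
  · interval_cases e <;> interval_cases e' <;> unfold skolemSeqFourMul at h <;>
      split_ifs at h <;> omega

theorem isSkolemPairing_skolemSeqFourMulAddOne (n : ℕ) :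
    IsSkolemPairing (4 * n + 1) (Finset.Icc 1 (2 * (4 * n + 1))) (skolemSeqFourMulAddOne n) := by
  refine .of_injective (fun k e hk hkt he => ?_)
    (fun k k' e e' hk hkt hk' hkt' he he' h => ?_) (by simp)
  · rw [Finset.mem_Icc]
    interval_cases e <;> unfold skolemSeqFourMulAddOne <;> split_ifs <;> omega
  · interval_cases e <;> interval_cases e' <;> unfold skolemSeqFourMulAddOne at h <;>
      split_ifs at h <;> omega

theorem isSkolemPairing_hookedSkolemSeqFourMulAddTwo (n : ℕ) :
    IsSkolemPairing (4 * n + 2)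
      (insert (2 * (4 * n + 2) + 1) (Finset.Icc 1 (2 * (4 * n + 2) - 1)))
      (hookedSkolemSeqFourMulAddTwo n) := by
  refine .of_injective (fun k e hk hkt he => ?_)
    (fun k k' e e' hk hkt hk' hkt' he he' h => ?_) ?_
  · rw [Finset.mem_insert, Finset.mem_Icc]
    interval_cases e <;> unfold hookedSkolemSeqFourMulAddTwo <;> split_ifs <;> omega
  · interval_cases e <;> interval_cases e' <;> unfold hookedSkolemSeqFourMulAddTwo at h <;>
      split_ifs at h <;> omega
  · rw [Finset.card_insert_of_notMem (by simp), Nat.card_Icc]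
    omega

theorem isSkolemPairing_hookedSkolemSeqFourMulAddThree (n : ℕ) :
    IsSkolemPairing (4 * n + 3)
      (insert (2 * (4 * n + 3) + 1) (Finset.Icc 1 (2 * (4 * n + 3) - 1)))
      (hookedSkolemSeqFourMulAddThree n) := by
  refine .of_injective (fun k e hk hkt he => ?_)
    (fun k k' e e' hk hkt hk' hkt' he he' h => ?_) ?_
  · rw [Finset.mem_insert, Finset.mem_Icc]
    interval_cases e <;> unfold hookedSkolemSeqFourMulAddThree <;> split_ifs <;> omega
  · interval_cases e <;> interval_cases e' <;> unfold hookedSkolemSeqFourMulAddThree at h <;>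
      split_ifs at h <;> omega
  · rw [Finset.card_insert_of_notMem (by simp), Nat.card_Icc]
    omega

theorem exists_isSkolemPairing {t : ℕ} (ht : t % 4 = 0 ∨ t % 4 = 1) :
    ∃ a, IsSkolemPairing t (Finset.Icc 1 (2 * t)) a := by
  rcases ht with ht | ht
  · obtain ⟨n, rfl⟩ : ∃ n, t = 4 * n := ⟨t / 4, by omega⟩
    exact ⟨_, isSkolemPairing_skolemSeqFourMul n⟩
  · obtain ⟨n, rfl⟩ : ∃ n, t = 4 * n + 1 := ⟨t / 4, by omega⟩
    exact ⟨_, isSkolemPairing_skolemSeqFourMulAddOne n⟩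

theorem exists_isSkolemPairing_hooked {t : ℕ} (ht : t % 4 = 2 ∨ t % 4 = 3) :
    ∃ a, IsSkolemPairing t (insert (2 * t + 1) (Finset.Icc 1 (2 * t - 1))) a := by
  rcases ht with ht | ht
  · obtain ⟨n, rfl⟩ : ∃ n, t = 4 * n + 2 := ⟨t / 4, by omega⟩
    exact ⟨_, isSkolemPairing_hookedSkolemSeqFourMulAddTwo n⟩
  · obtain ⟨n, rfl⟩ : ∃ n, t = 4 * n + 3 := ⟨t / 4, by omega⟩
    exact ⟨_, isSkolemPairing_hookedSkolemSeqFourMulAddThree n⟩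

namespace C3C4

open Windmill

variable (t s : ℕ)

/-- Squares `j < numAscending t s` have their middle label above their outer labels, the others
below. The number is chosen so that the middle labels, `2t + 8j + 5` and `4s - 2 - 4j`
respectively, miss all outer labels. -/
def numAscending : ℕ := (2 * s + 3 - t) / 6

def spokeIndex (j : ℕ) : ℕ :=
  if j < numAscending t s then 2 * j + (if t % 4 < 2 then 1 else 0)
  else 2 * s - 1 - (j - numAscending t s)

def rimIndex (j : ℕ) : ℕ :=
  if j < numAscending t s then 2 * j + (if t % 4 < 2 then 0 else 1)
  else j + numAscending t s

def squareLabel (j : ℕ) : ℕ → ℕ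
  | 1 => t + 2 * spokeIndex t s j + 1
  | 2 =>
    if j < numAscending t s then t + 2 * spokeIndex t s j + 2 + (t + 2 * rimIndex t s j + 1)
    else t + 2 * spokeIndex t s j + 1 - (t + 2 * rimIndex t s j + 1)
  | 3 => t + 2 * spokeIndex t s j + 2
  | _ => 0

def triangleLabel (a : ℕ → ℕ) (k : ℕ) : ℕ → ℕ
  | 1 => t + 4 * s + a k
  | 2 => t + 4 * s + a k + k
  | _ => 0

/-- Vane `i < t` is the triangle with difference `i + 1`, vane `t + j` the `j`-th square. -/
def vaneLabel (a : ℕ → ℕ) (i : ℕ) : ℕ → ℕ :=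
  if i < t then triangleLabel t s a (i + 1) else squareLabel t s (i - t)

variable {t s}

theorem spokeIndex_lt {j : ℕ} (hj : j < s) : spokeIndex t s j < 2 * s := by
  unfold spokeIndex; split_ifs <;> unfold numAscending at * <;> omega

theorem rimIndex_lt {j : ℕ} (hj : j < s) : rimIndex t s j < 2 * s := by
  unfold rimIndex; split_ifs <;> unfold numAscending at * <;> omega

theorem rimIndex_lt_spokeIndex {j : ℕ} (hj : j < s) (hu : numAscending t s ≤ j) :
    rimIndex t s j < spokeIndex t s j := by
  unfold spokeIndex rimIndex; split_ifs <;> unfold numAscending at * <;> omega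

theorem spokeIndex_inj {j j' : ℕ} (hj : j < s) (hj' : j' < s)
    (h : spokeIndex t s j = spokeIndex t s j') : j = j' := by
  unfold spokeIndex at h; split_ifs at h <;> unfold numAscending at * <;> omega

theorem rimIndex_inj {j j' : ℕ} (h : rimIndex t s j = rimIndex t s j') : j = j' := by
  unfold rimIndex at h; split_ifs at h <;> unfold numAscending at * <;> omega

theorem spokeIndex_ne_rimIndex {j j' : ℕ} (hj : j < s) (hj' : j' < s) :
    spokeIndex t s j ≠ rimIndex t s j' := by
  unfold spokeIndex rimIndex; split_ifs <;> unfold numAscending at * <;> omega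

theorem squareLabel_pos_le {j p : ℕ} (hj : j < s) (hp : 0 < p) (hp' : p < 4) :
    0 < squareLabel t s j p ∧ squareLabel t s j p ≤ t + 4 * s := by
  interval_cases p <;> simp only [squareLabel, spokeIndex, rimIndex] <;> split_ifs <;>
    unfold numAscending at * <;> omega

theorem squareLabel_inj {j j' p p' : ℕ} (hj : j < s) (hj' : j' < s) (hp : 0 < p) (hp4 : p < 4)
    (hp' : 0 < p') (hp4' : p' < 4) (h : squareLabel t s j p = squareLabel t s j' p') :
    j = j' ∧ p = p' := by
  interval_cases p <;> interval_cases p' <;> simp only [squareLabel, spokeIndex, rimIndex] at h <;>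
    split_ifs at h <;> unfold numAscending at * <;> omega

theorem squareEdgeLabel_zero (j : ℕ) :
    vaneEdgeLabel (squareLabel t s) j 0 = t + 2 * spokeIndex t s j + 1 := by
  simp only [vaneEdgeLabel, squareLabel]
  omega

theorem squareEdgeLabel_one {j : ℕ} (hj : j < s) :
    vaneEdgeLabel (squareLabel t s) j 1 =
      t + 2 * rimIndex t s j + if j < numAscending t s then 2 else 1 := by
  simp only [vaneEdgeLabel, squareLabel]
  split_ifs with hu
  · omega
  · have := rimIndex_lt_spokeIndex hj (not_lt.1 hu)
    omega

theorem squareEdgeLabel_two {j : ℕ} (hj : j < s) :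
    vaneEdgeLabel (squareLabel t s) j 2 =
      t + 2 * rimIndex t s j + if j < numAscending t s then 1 else 2 := by
  simp only [vaneEdgeLabel, squareLabel]
  split_ifs with hu
  · omega
  · have := rimIndex_lt_spokeIndex hj (not_lt.1 hu)
    omega

theorem squareEdgeLabel_three (j : ℕ) :
    vaneEdgeLabel (squareLabel t s) j 3 = t + 2 * spokeIndex t s j + 2 := by
  simp only [vaneEdgeLabel, squareLabel]
  omega

theorem squareEdgeLabel_mem {j k : ℕ} (hj : j < s) (hk : k < 4) :
    t + 1 ≤ vaneEdgeLabel (squareLabel t s) j k ∧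
      vaneEdgeLabel (squareLabel t s) j k ≤ t + 4 * s := by
  have := spokeIndex_lt (t := t) hj
  have := rimIndex_lt (t := t) hj
  interval_cases k <;>
    simp only [squareEdgeLabel_zero, squareEdgeLabel_one hj, squareEdgeLabel_two hj,
      squareEdgeLabel_three] <;> (try split_ifs) <;> omega

theorem squareEdgeLabel_inj {j j' k k' : ℕ} (hj : j < s) (hj' : j' < s) (hk : k < 4)
    (hk' : k' < 4)
    (h : vaneEdgeLabel (squareLabel t s) j k = vaneEdgeLabel (squareLabel t s) j' k') :
    j = j' ∧ k = k' := by
  have := spokeIndex_inj (t := t) hj hj'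
  have := rimIndex_inj (t := t) (s := s) (j := j) (j' := j')
  have := spokeIndex_ne_rimIndex (t := t) hj hj'
  have := spokeIndex_ne_rimIndex (t := t) hj' hj
  interval_cases k <;> interval_cases k' <;>
    simp only [squareEdgeLabel_zero, squareEdgeLabel_one hj, squareEdgeLabel_one hj',
      squareEdgeLabel_two hj, squareEdgeLabel_two hj', squareEdgeLabel_three] at h <;>
    (try split_ifs at h) <;> omega

theorem exists_squareEdgeLabel_eq {n : ℕ} (hn : t + 1 ≤ n) (hn' : n ≤ t + 4 * s) :
    ∃ j < s, ∃ k < 4, vaneEdgeLabel (squareLabel t s) j k = n := by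
  have hmaps : Set.MapsTo (fun x : ℕ × ℕ => vaneEdgeLabel (squareLabel t s) x.1 x.2)
      ↑(Finset.range s ×ˢ Finset.range 4) ↑(Finset.Icc (t + 1) (t + 4 * s)) := by
    rintro ⟨j, k⟩ hx
    simp only [Finset.coe_product, Set.mem_prod, Finset.coe_range, Set.mem_Iio] at hx
    simpa using squareEdgeLabel_mem hx.1 hx.2
  have hinj : Set.InjOn (fun x : ℕ × ℕ => vaneEdgeLabel (squareLabel t s) x.1 x.2)
      ↑(Finset.range s ×ˢ Finset.range 4) := by
    rintro ⟨j, k⟩ hx ⟨j', k'⟩ hx' h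
    simp only [Finset.coe_product, Set.mem_prod, Finset.coe_range, Set.mem_Iio] at hx hx'
    obtain ⟨rfl, rfl⟩ := squareEdgeLabel_inj hx.1 hx'.1 hx.2 hx'.2 h
    rfl
  obtain ⟨⟨j, k⟩, hx, rfl⟩ := Finset.surjOn_of_injOn_of_card_le _ hmaps hinj
    (by simp [mul_comm]) (by simpa using And.intro hn hn')
  simp only [Finset.coe_product, Set.mem_prod, Finset.coe_range, Set.mem_Iio] at hx
  exact ⟨j, hx.1, k, hx.2, rfl⟩

variable {T : Finset ℕ} {a : ℕ → ℕ}

theorem vaneLabel_cases {i p : ℕ} (hp : 0 < p) (hp' : p < if i < t then 3 else 4) :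
    i < t ∧ p ≤ 2 ∧ vaneLabel t s a i p = t + 4 * s + (a (i + 1) + (p - 1) * (i + 1)) ∨
      t ≤ i ∧ p < 4 ∧ vaneLabel t s a i p = squareLabel t s (i - t) p := by
  unfold vaneLabel
  split_ifs at hp' ⊢ with hit
  · left
    interval_cases p <;> simp [triangleLabel, hit, add_assoc]
  · right
    exact ⟨by omega, hp', rfl⟩

theorem vaneEdgeLabel_cases {i k : ℕ} (hk : k < if i < t then 3 else 4) :
    i < t ∧ k = 1 ∧ vaneEdgeLabel (vaneLabel t s a) i k = i + 1 ∨
      i < t ∧ (k = 0 ∨ k = 2) ∧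
        vaneEdgeLabel (vaneLabel t s a) i k = t + 4 * s + (a (i + 1) + k / 2 * (i + 1)) ∨
      t ≤ i ∧ k < 4 ∧
        vaneEdgeLabel (vaneLabel t s a) i k = vaneEdgeLabel (squareLabel t s) (i - t) k := by
  unfold vaneEdgeLabel vaneLabel
  split_ifs at hk ⊢ with hit
  · interval_cases k
    · exact Or.inr (Or.inl ⟨hit, Or.inl rfl, by simp only [triangleLabel]; omega⟩)
    · exact Or.inl ⟨hit, rfl, by simp only [triangleLabel]; omega⟩
    · exact Or.inr (Or.inl ⟨hit, Or.inr rfl, by simp only [triangleLabel]; omega⟩)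
  · exact Or.inr (Or.inr ⟨by omega, hk, rfl⟩)

theorem labelling_vaneLabel_injective (ha : IsSkolemPairing t T a) (hT : ∀ x ∈ T, 0 < x) :
    Function.Injective
      (labelling (L := List.replicate t 3 ++ List.replicate s 4) (vaneLabel t s a)) := by
  apply labelling_injective
  · intro i p hp hp'
    have hi := List.val_lt_of_replicate_append_replicate i
    rw [List.get_replicate_append_replicate] at hp'
    rcases vaneLabel_cases (s := s) (a := a) hp hp' with ⟨hit, -, h⟩ | ⟨hit, hp4, h⟩ <;> rw [h]
    · omega
    · exact (squareLabel_pos_le (by omega) hp hp4).1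
  · intro i i' p p' hp hp' hq hq' h
    have hi := List.val_lt_of_replicate_append_replicate i
    have hi' := List.val_lt_of_replicate_append_replicate i'
    rw [List.get_replicate_append_replicate] at hp' hq'
    suffices (i : ℕ) = i' ∧ p = p' from ⟨Fin.ext this.1, this.2⟩
    rcases vaneLabel_cases (s := s) (a := a) hp hp' with ⟨hit, hp2, h1⟩ | ⟨hit, hp4, h1⟩ <;>
      rcases vaneLabel_cases (s := s) (a := a) hq hq' with ⟨hit', hq2, h2⟩ | ⟨hit', hq4, h2⟩ <;>
      rw [h1, h2] at h
    · have := ha.inj (k := i + 1) (e := p - 1) (k' := i' + 1) (e' := p' - 1)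
        (by omega) (by omega) (by omega) (by omega) (by omega) (by omega) (by omega)
      omega
    · have := hT _ (ha.mem (k := i + 1) (e := p - 1) (by omega) (by omega) (by omega))
      have := squareLabel_pos_le (t := t) (s := s) (j := i' - t) (by omega) hq hq4
      omega
    · have := hT _ (ha.mem (k := i' + 1) (e := p' - 1) (by omega) (by omega) (by omega))
      have := squareLabel_pos_le (t := t) (s := s) (j := i - t) (by omega) hp hp4
      omega
    · have := squareLabel_inj (by omega) (by omega) hp hp4 hq hq4 h
      omega

theorem labelling_vaneLabel_le {B : ℕ} (ha : IsSkolemPairing t T a) (hB : ∀ x ∈ T, x ≤ B)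
    (v : WindmillVertex (List.replicate t 3 ++ List.replicate s 4)) :
    labelling (vaneLabel t s a) v ≤ t + 4 * s + B := by
  rcases v with _ | ⟨i, j⟩
  · exact Nat.zero_le _
  · have hi := List.val_lt_of_replicate_append_replicate i
    have hj : (j : ℕ) + 1 < if (i : ℕ) < t then 3 else 4 := by
      have := j.isLt
      rw [← List.get_replicate_append_replicate]
      omega
    rcases vaneLabel_cases (s := s) (a := a) (p := j + 1) (by omega) hj
      with ⟨hit, hp2, h⟩ | ⟨hit, hp4, h⟩ <;> rw [labelling, h]
    · have := hB _ (ha.mem (k := i + 1) (e := j + 1 - 1) (by omega) (by omega) (by omega))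
      omega
    · have := (squareLabel_pos_le (t := t) (s := s) (j := i - t) (by omega) (by omega) hp4).2
      omega

theorem vaneEdgeLabel_mem (ha : IsSkolemPairing t T a) {i k : ℕ} (hi : i < t + s)
    (hk : k < if i < t then 3 else 4) :
    vaneEdgeLabel (vaneLabel t s a) i k ∈ Set.Icc 1 (t + 4 * s) ∪ (t + 4 * s + ·) '' T := by
  rcases vaneEdgeLabel_cases (s := s) (a := a) hk with
    ⟨hit, -, h⟩ | ⟨hit, hk2, h⟩ | ⟨hit, hk4, h⟩ <;> rw [h]
  · exact Or.inl ⟨by omega, by omega⟩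
  · exact Or.inr ⟨_, ha.mem (by omega) (by omega) (by omega), rfl⟩
  · have := squareEdgeLabel_mem (t := t) (s := s) (j := i - t) (by omega) hk4
    exact Or.inl ⟨by omega, by omega⟩

theorem vaneEdgeLabel_inj (ha : IsSkolemPairing t T a) (hT : ∀ x ∈ T, 0 < x) {i i' k k' : ℕ}
    (hi : i < t + s) (hi' : i' < t + s) (hk : k < if i < t then 3 else 4)
    (hk' : k' < if i' < t then 3 else 4)
    (h : vaneEdgeLabel (vaneLabel t s a) i k = vaneEdgeLabel (vaneLabel t s a) i' k') :
    i = i' ∧ k = k' := by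
  rcases vaneEdgeLabel_cases (s := s) (a := a) hk with
    ⟨hit, hk1, h1⟩ | ⟨hit, hk2, h1⟩ | ⟨hit, hk4, h1⟩ <;>
    rcases vaneEdgeLabel_cases (s := s) (a := a) hk' with
      ⟨hit', hk1', h2⟩ | ⟨hit', hk2', h2⟩ | ⟨hit', hk4', h2⟩ <;>
    rw [h1, h2] at h
  · omega
  · have := hT _ (ha.mem (k := i' + 1) (e := k' / 2) (by omega) (by omega) (by omega))
    omega
  · have := squareEdgeLabel_mem (t := t) (s := s) (j := i' - t) (by omega) hk4'
    omega
  · have := hT _ (ha.mem (k := i + 1) (e := k / 2) (by omega) (by omega) (by omega))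
    omega
  · have := ha.inj (k := i + 1) (e := k / 2) (k' := i' + 1) (e' := k' / 2)
      (by omega) (by omega) (by omega) (by omega) (by omega) (by omega) (by omega)
    omega
  · have := hT _ (ha.mem (k := i + 1) (e := k / 2) (by omega) (by omega) (by omega))
    have := squareEdgeLabel_mem (t := t) (s := s) (j := i' - t) (by omega) hk4'
    omega
  · have := squareEdgeLabel_mem (t := t) (s := s) (j := i - t) (by omega) hk4
    omega
  · have := hT _ (ha.mem (k := i' + 1) (e := k' / 2) (by omega) (by omega) (by omega))
    have := squareEdgeLabel_mem (t := t) (s := s) (j := i - t) (by omega) hk4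
    omega
  · have := squareEdgeLabel_inj (by omega) (by omega) hk4 hk4' h
    omega

theorem exists_vaneEdgeLabel_eq (ha : IsSkolemPairing t T a) {n : ℕ}
    (hn : n ∈ Set.Icc 1 (t + 4 * s) ∪ (t + 4 * s + ·) '' T) :
    ∃ i < t + s, ∃ k < (if i < t then 3 else 4), vaneEdgeLabel (vaneLabel t s a) i k = n := by
  rcases hn with ⟨hn1, hn2⟩ | ⟨x, hx, rfl⟩
  · by_cases hnt : n ≤ t
    · have hk : 1 < if n - 1 < t then 3 else 4 := by split_ifs <;> omega
      refine ⟨n - 1, by omega, 1, hk, ?_⟩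
      rcases vaneEdgeLabel_cases (s := s) (a := a) hk with ⟨-, -, h⟩ | ⟨-, hk', -⟩ | ⟨hit, -⟩ <;>
        omega
    · obtain ⟨j, hj, k, hk, hjk⟩ := exists_squareEdgeLabel_eq (t := t) (s := s) (by omega) hn2
      have hk' : k < if t + j < t then 3 else 4 := by rwa [if_neg (by omega)]
      refine ⟨t + j, by omega, k, hk', ?_⟩
      rcases vaneEdgeLabel_cases (s := s) (a := a) hk' with ⟨hit, -⟩ | ⟨hit, -⟩ | ⟨-, -, h⟩
      · omega
      · omega
      · rw [h, Nat.add_sub_cancel_left, hjk]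
  · obtain ⟨k, e, hk, hkt, he, rfl⟩ := ha.exists_eq hx
    have hk' : 2 * e < if k - 1 < t then 3 else 4 := by split_ifs <;> omega
    refine ⟨k - 1, by omega, 2 * e, hk', ?_⟩
    rcases vaneEdgeLabel_cases (s := s) (a := a) hk' with ⟨-, h1, -⟩ | ⟨-, -, h⟩ | ⟨hit, -⟩
    · omega
    · rw [h, Nat.sub_add_cancel hk, show 2 * e / 2 = e by omega]
    · omega

theorem bijOn_edgeLabel_labelling_vaneLabel (ha : IsSkolemPairing t T a) (hT : ∀ x ∈ T, 0 < x) :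
    Set.BijOn (edgeLabel (labelling (vaneLabel t s a)))
      (Windmill (List.replicate t 3 ++ List.replicate s 4)).edgeSet
      (Set.Icc 1 (t + 4 * s) ∪ (t + 4 * s + ·) '' T) := by
  apply bijOn_edgeLabel_labelling
  · intro i
    rw [List.get_replicate_append_replicate]
    split_ifs <;> omega
  · intro i
    rw [List.get_replicate_append_replicate]
    unfold vaneLabel
    split_ifs <;> exact ⟨rfl, rfl⟩
  · intro i k hk
    rw [List.get_replicate_append_replicate] at hk
    exact vaneEdgeLabel_mem ha (List.val_lt_of_replicate_append_replicate i) hk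
  · intro i i' k k' hk hk' h
    rw [List.get_replicate_append_replicate] at hk hk'
    obtain ⟨hii', rfl⟩ := vaneEdgeLabel_inj ha hT (List.val_lt_of_replicate_append_replicate i)
      (List.val_lt_of_replicate_append_replicate i') hk hk' h
    exact ⟨Fin.ext hii', rfl⟩
  · intro n hn
    obtain ⟨i, hi, k, hk, h⟩ := exists_vaneEdgeLabel_eq ha hn
    exact ⟨⟨i, by simpa using hi⟩, k, by rwa [List.get_replicate_append_replicate], h⟩

end C3C4

theorem C3C4_windmill_graceful_general (t s : ℕ) :
    ((t % 4 = 0 ∨ t % 4 = 1) →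
      IsGraceful (Windmill (List.replicate t 3 ++ List.replicate s 4)) (3 * t + 4 * s)) ∧
    ((t % 4 = 2 ∨ t % 4 = 3) →
      IsNearGraceful (Windmill (List.replicate t 3 ++ List.replicate s 4)) (3 * t + 4 * s)) := by
  have hm : t + 4 * s + 2 * t = 3 * t + 4 * s := by ring
  constructor
  · intro ht
    obtain ⟨a, ha⟩ := exists_isSkolemPairing ht
    have hT : ∀ x ∈ Finset.Icc 1 (2 * t), 0 < x ∧ x ≤ 2 * t := fun x hx => Finset.mem_Icc.1 hx
    have hbij := C3C4.bijOn_edgeLabel_labelling_vaneLabel (s := s) ha (fun x hx => (hT x hx).1)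
    rw [Set.Icc_union_image_const_add_Icc, hm] at hbij
    refine ⟨_, C3C4.labelling_vaneLabel_injective ha (fun x hx => (hT x hx).1), fun v => ?_, hbij⟩
    exact hm ▸ C3C4.labelling_vaneLabel_le ha (fun x hx => (hT x hx).2) v
  · intro ht
    obtain ⟨a, ha⟩ := exists_isSkolemPairing_hooked ht
    have hT : ∀ x ∈ insert (2 * t + 1) (Finset.Icc 1 (2 * t - 1)), 0 < x ∧ x ≤ 2 * t + 1 := by
      intro x hx
      simp only [Finset.mem_insert, Finset.mem_Icc] at hx
      omega
    have hbij := C3C4.bijOn_edgeLabel_labelling_vaneLabel (s := s) ha (fun x hx => (hT x hx).1)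
    rw [Set.Icc_union_image_const_add_insert_Icc _ (by omega), hm] at hbij
    refine ⟨_, C3C4.labelling_vaneLabel_injective ha (fun x hx => (hT x hx).1), fun v => ?_,
      Or.inr hbij⟩
    have := C3C4.labelling_vaneLabel_le ha (fun x hx => (hT x hx).2) v
    omega

/-- For all integers `s ≥ 1` and `t ≥ 1`, the variable windmill `C₃ᵗC₄ˢ` (which has
`3t + 4s` edges) is graceful when `t ≡ 0, 1 (mod 4)` and near graceful when
`t ≡ 2, 3 (mod 4)`. -/
theorem C3C4_windmill_graceful (t s : ℕ) (ht : 1 ≤ t) (hs : 1 ≤ s) :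
    ((t % 4 = 0 ∨ t % 4 = 1) →
      IsGraceful (Windmill (List.replicate t 3 ++ List.replicate s 4)) (3 * t + 4 * s)) ∧
    ((t % 4 = 2 ∨ t % 4 = 3) →
      IsNearGraceful (Windmill (List.replicate t 3 ++ List.replicate s 4)) (3 * t + 4 * s)) :=
  C3C4_windmill_graceful_general t s
end

section
/- For every integer d ≥ 1, there exists a Langford sequence with defect d and order 2d−1. -/
/-- A Skolem-type collection of pairs indexed by `S`: for each `k ∈ S` there is a pair
`(a k, b k)` with `b k − a k = k`, and the entries of all the pairs partition the
finite set of positions `T` (the map sending each "pair slot" to its entry is a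
bijection onto `T`). -/
def IsSkolemTypeOn (S T : Finset ℕ) (a b : ℕ → ℕ) : Prop :=
  (∀ k ∈ S, b k = a k + k) ∧
    Set.BijOn (fun p : ℕ × Bool => if p.2 then b p.1 else a p.1)
      ↑(S ×ˢ (Finset.univ : Finset Bool)) ↑T

/-- For every integer `d ≥ 1`, there exists a Langford sequence with defect `d` and order
`l = 2d − 1`: pairs `(aₖ, bₖ)` for `k ∈ {d, …, d + l − 1} = {d, …, 3d − 2}` with
`bₖ − aₖ = k`, whose entries partition `{1, …, 2l} = {1, …, 4d − 2}`. -/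
theorem langford_defect_d_order_two_d_sub_one (d : ℕ) (hd : 1 ≤ d) :
    ∃ a b : ℕ → ℕ,
      IsSkolemTypeOn (Finset.Icc d (3 * d - 2)) (Finset.Icc 1 (4 * d - 2)) a b := by
  set S : Finset ℕ := Finset.Icc d (3 * d - 2) with hS
  set T : Finset ℕ := Finset.Icc 1 (4 * d - 2) with hT
  refine ⟨fun k => if k ≤ 2 * d - 1 then k else k - (2 * d - 1),
    fun k => (if k ≤ 2 * d - 1 then k else k - (2 * d - 1)) + k, fun k _ => rfl, ?_⟩
  set f : ℕ × Bool → ℕ := fun p =>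
    if p.2 then (if p.1 ≤ 2 * d - 1 then p.1 else p.1 - (2 * d - 1)) + p.1
    else (if p.1 ≤ 2 * d - 1 then p.1 else p.1 - (2 * d - 1)) with hf
  have hmem : ∀ p : ℕ × Bool, p ∈ S ×ˢ (Finset.univ : Finset Bool) ↔
      d ≤ p.1 ∧ p.1 ≤ 3 * d - 2 := by
    intro p
    simp [Finset.mem_product, hS, Finset.mem_Icc]
  have hmaps : ∀ p ∈ S ×ˢ (Finset.univ : Finset Bool), f p ∈ T := by
    rintro ⟨k, s⟩ hp
    rw [hmem] at hp
    simp only [hT, Finset.mem_Icc, hf]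
    cases s <;> simp only [if_true, if_false, Bool.false_eq_true] <;> split_ifs <;> omega
  have hinj : ∀ p ∈ S ×ˢ (Finset.univ : Finset Bool),
      ∀ q ∈ S ×ˢ (Finset.univ : Finset Bool), f p = f q → p = q := by
    rintro ⟨k, s⟩ hp ⟨k', s'⟩ hq heq
    rw [hmem] at hp hq
    simp only [hf] at heq
    cases s <;> cases s' <;>
      simp only [if_true, if_false, Bool.false_eq_true, Prod.mk.injEq, and_true,
        and_false] at heq ⊢ <;>
      split_ifs at heq <;> omega
  have hcard : T.card ≤ (S ×ˢ (Finset.univ : Finset Bool)).card := by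
    rw [Finset.card_product, hS, hT, Nat.card_Icc, Nat.card_Icc]
    simp [Fintype.card_bool]
    omega
  have himg : Finset.image f (S ×ˢ (Finset.univ : Finset Bool)) = T := by
    apply Finset.eq_of_subset_of_card_le
    · intro x hx
      obtain ⟨p, hp, rfl⟩ := Finset.mem_image.mp hx
      exact hmaps p hp
    · rw [Finset.card_image_of_injOn (fun p hp q hq => hinj p hp q hq)]
      exact hcard
  refine ⟨fun p hp => hmaps p hp, fun p hp q hq => hinj p (by exact_mod_cast hp) q (by exact_mod_cast hq), ?_⟩
  intro x hx
  have : x ∈ Finset.image f (S ×ˢ (Finset.univ : Finset Bool)) := by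
    rw [himg]; exact_mod_cast hx
  obtain ⟨p, hp, rfl⟩ := Finset.mem_image.mp this
  exact ⟨p, by exact_mod_cast hp, rfl⟩
end

section
/- For every integer n ≥ 1, there exists a two-fold Skolem-type sequence of order n with H = {1} ∪ {4i : 1 ≤ i ≤ n−1}. -/
/-- A two-fold Skolem-type collection of pairs with set `H`: for each `p ∈ H` there are
two pairs `(c p, d p)` and `(e p, f p)` with `d p − c p = p` and `f p − e p = p`, and the
entries of all the pairs partition the finite set of positions `T` (the map sending each
of the four "pair slots" of each `p ∈ H` to its entry is a bijection onto `T`). -/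
def IsTwoFoldSkolemTypeOn (H T : Finset ℕ) (c d e f : ℕ → ℕ) : Prop :=
  (∀ p ∈ H, d p = c p + p ∧ f p = e p + p) ∧
    Set.BijOn (fun q : ℕ × Fin 4 => ![c, d, e, f] q.2 q.1)
      ↑(H ×ˢ (Finset.univ : Finset (Fin 4))) ↑T

set_option maxHeartbeats 1600000 in
/-- For every integer `n ≥ 1`, there exists a two-fold Skolem-type sequence of order `n`
(so of length `4n`, its positions being `{1, …, 4n}`) with
`H = {1} ∪ {4i : 1 ≤ i ≤ n − 1}`. -/
theorem twofold_skolem_type_exists (n : ℕ) (hn : 1 ≤ n) :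
    ∃ c d e f : ℕ → ℕ,
      IsTwoFoldSkolemTypeOn
        (insert 1 ((Finset.Icc 1 (n - 1)).image (fun i => 4 * i)))
        (Finset.Icc 1 (4 * n)) c d e f := by
  classical
  set H : Finset ℕ := insert 1 ((Finset.Icc 1 (n - 1)).image (fun i => 4 * i)) with hH
  have hmem : ∀ p ∈ H, p = 1 ∨ ∃ i, 1 ≤ i ∧ i ≤ n - 1 ∧ p = 4 * i := by
    intro p hp
    rcases Finset.mem_insert.mp hp with rfl | hp
    · exact Or.inl rfl
    · obtain ⟨i, hi, rfl⟩ := Finset.mem_image.mp hp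
      rw [Finset.mem_Icc] at hi
      exact Or.inr ⟨i, hi.1, hi.2, rfl⟩
  refine ⟨fun p => if p = 1 then 2*n-1 else 2*n - p/2,
          fun p => if p = 1 then 2*n else 2*n + p/2,
          fun p => if p = 1 then 4*n-1 else 2*n - p/2 - 1,
          fun p => if p = 1 then 4*n else 2*n + p/2 - 1, ?_, ?_⟩
  · intro p hp
    rcases hmem p hp with rfl | ⟨i, hi1, hi2, rfl⟩
    · simp; omega
    · have h1 : 4 * i ≠ 1 := by omega
      simp only [if_neg h1]
      omega
  · set g : ℕ × Fin 4 → ℕ := fun q =>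
      ![fun p => if p = 1 then 2*n-1 else 2*n - p/2,
        fun p => if p = 1 then 2*n else 2*n + p/2,
        fun p => if p = 1 then 4*n-1 else 2*n - p/2 - 1,
        fun p => if p = 1 then 4*n else 2*n + p/2 - 1] q.2 q.1 with hg
    have hgen : ∀ (p : ℕ) (k : Fin 4), g (p, k) =
        if k.val = 0 then (if p = 1 then 2*n-1 else 2*n - p/2)
        else if k.val = 1 then (if p = 1 then 2*n else 2*n + p/2)
        else if k.val = 2 then (if p = 1 then 4*n-1 else 2*n - p/2 - 1)
        else (if p = 1 then 4*n else 2*n + p/2 - 1) := by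
      intro p k
      fin_cases k <;> rfl
    set S : Finset (ℕ × Fin 4) := H ×ˢ (Finset.univ : Finset (Fin 4)) with hS
    have hinj : Set.InjOn g ↑S := by
      rintro ⟨p, k⟩ hp ⟨q, l⟩ hq hab
      rw [Finset.mem_coe, Finset.mem_product] at hp hq
      have hab' : g (p, k) = g (q, l) := hab
      rw [hgen, hgen] at hab'
      have hk4 := k.isLt
      have hl4 := l.isLt
      simp only [Prod.mk.injEq]
      rcases hmem p hp.1 with rfl | ⟨i, hi1, hi2, rfl⟩ <;>
        rcases hmem q hq.1 with rfl | ⟨j, hj1, hj2, rfl⟩ <;>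
        split_ifs at hab' <;>
        first
          | exact ⟨by omega, Fin.ext (by omega)⟩
          | (exfalso; omega)
    have hsub : Finset.image g S ⊆ Finset.Icc 1 (4 * n) := by
      intro t ht
      obtain ⟨⟨p, k⟩, hq, rfl⟩ := Finset.mem_image.mp ht
      rw [Finset.mem_product] at hq
      rw [Finset.mem_Icc, hgen]
      have hk4 := k.isLt
      rcases hmem p hq.1 with rfl | ⟨i, hi1, hi2, rfl⟩ <;> split_ifs <;> omega
    have hcardH : H.card = n := by
      rw [hH, Finset.card_insert_of_notMem, Finset.card_image_of_injective _
        (fun a b h => by simp only at h; omega : Function.Injective (fun i : ℕ => 4 * i))]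
      · rw [Nat.card_Icc]; omega
      · intro h
        simp only [Finset.mem_image, Finset.mem_Icc] at h
        obtain ⟨i, hi, h⟩ := h
        omega
    have hcardS : S.card = 4 * n := by
      rw [hS, Finset.card_product, hcardH, Finset.card_univ, Fintype.card_fin]
      omega
    have himg : Finset.image g S = Finset.Icc 1 (4 * n) := by
      apply Finset.eq_of_subset_of_card_le hsub
      rw [Finset.card_image_of_injOn hinj, hcardS, Nat.card_Icc]
      omega
    refine ⟨?_, hinj, ?_⟩
    · intro x hx
      have : g x ∈ Finset.image g S := Finset.mem_image_of_mem g hx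
      rw [himg] at this
      exact this
    · rw [← himg, Finset.coe_image]
      exact Set.Subset.refl _
end

section
/- For every odd integer n ≥ 3, there exists a two-fold Skolem sequence of order n all of whose right endpoints lie in positions greater than or equal to (n+3)/2. -/
/-- For every odd integer `n ≥ 3`, there exists a two-fold Skolem sequence of order `n`
(with `H = {1, …, n}` and positions `{1, …, 4n}`) all of whose right endpoints lie in
positions `≥ (n+3)/2`. -/
theorem twofold_skolem_odd_right_endpoints (n : ℕ) (hn : 3 ≤ n) (hodd : Odd n) :
    ∃ c d e f : ℕ → ℕ,
      IsTwoFoldSkolemTypeOn (Finset.Icc 1 n) (Finset.Icc 1 (4 * n)) c d e f ∧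
      ∀ p ∈ Finset.Icc 1 n, (n + 3) / 2 ≤ d p ∧ (n + 3) / 2 ≤ f p := by
  have hno : n % 2 = 1 := Nat.odd_iff.mp hodd
  set m : ℕ := (n + 1) / 2 with hm
  set c : ℕ → ℕ := fun p => if p % 2 = 1 then m - (p - 1) / 2 else 3 * m - p / 2 with hc
  set e : ℕ → ℕ := fun p =>
    if p % 2 = 1 then (if p = n then 3 * m else 7 * m - 2 - (p + 1) / 2)
    else 5 * m - 1 - p / 2 with he
  set d : ℕ → ℕ := fun p => c p + p with hd
  set f : ℕ → ℕ := fun p => e p + p with hf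
  set S : Finset (ℕ × Fin 4) := Finset.Icc 1 n ×ˢ (Finset.univ : Finset (Fin 4)) with hS
  set F : ℕ × Fin 4 → ℕ := fun q => ![c, d, e, f] q.2 q.1 with hF
  have hF0 : ∀ p, F (p, 0) = c p := fun p => rfl
  have hF1 : ∀ p, F (p, 1) = d p := fun p => rfl
  have hF2 : ∀ p, F (p, 2) = e p := fun p => rfl
  have hF3 : ∀ p, F (p, 3) = f p := fun p => rfl
  have hmaps : ∀ q ∈ S, F q ∈ Finset.Icc 1 (4 * n) := by
    rintro ⟨p, i⟩ hq
    simp only [hS, Finset.mem_product, Finset.mem_Icc, Finset.mem_univ, and_true] at hq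
    fin_cases i
    · show c p ∈ Finset.Icc 1 (4 * n)
      simp only [hc, Finset.mem_Icc]; split_ifs <;> omega
    · show d p ∈ Finset.Icc 1 (4 * n)
      simp only [hd, hc, Finset.mem_Icc]; split_ifs <;> omega
    · show e p ∈ Finset.Icc 1 (4 * n)
      simp only [he, Finset.mem_Icc]; split_ifs <;> omega
    · show f p ∈ Finset.Icc 1 (4 * n)
      simp only [hf, he, Finset.mem_Icc]; split_ifs <;> omega
  have hsurj : ∀ b ∈ Finset.Icc 1 (4 * n), ∃ a ∈ S, F a = b := by
    intro q hq
    simp only [Finset.mem_Icc] at hq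
    have hmem : ∀ p : ℕ, 1 ≤ p → p ≤ n → ∀ i : Fin 4, (p, i) ∈ S := by
      intro p h1 h2 i
      simp only [hS, Finset.mem_product, Finset.mem_Icc, Finset.mem_univ, and_true]
      exact ⟨h1, h2⟩
    by_cases h1 : q ≤ m
    · refine ⟨(2 * m + 1 - 2 * q, 0), hmem _ (by omega) (by omega) _, ?_⟩
      rw [hF0]; simp only [hc]; split_ifs <;> omega
    by_cases h2 : q ≤ 2 * m
    · refine ⟨(2 * q - (2 * m + 1), 1), hmem _ (by omega) (by omega) _, ?_⟩
      rw [hF1]; simp only [hd, hc]; split_ifs <;> omega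
    by_cases h3 : q ≤ 3 * m - 1
    · refine ⟨(6 * m - 2 * q, 0), hmem _ (by omega) (by omega) _, ?_⟩
      rw [hF0]; simp only [hc]; split_ifs <;> omega
    by_cases h4 : q = 3 * m
    · refine ⟨(n, 2), hmem _ (by omega) (by omega) _, ?_⟩
      rw [hF2]; simp only [he]; split_ifs <;> omega
    by_cases h5 : q ≤ 4 * m - 1
    · refine ⟨(2 * q - 6 * m, 1), hmem _ (by omega) (by omega) _, ?_⟩
      rw [hF1]; simp only [hd, hc]; split_ifs <;> omega
    by_cases h6 : q ≤ 5 * m - 2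
    · refine ⟨(10 * m - 2 - 2 * q, 2), hmem _ (by omega) (by omega) _, ?_⟩
      rw [hF2]; simp only [he]; split_ifs <;> omega
    by_cases h7 : q = 5 * m - 1
    · refine ⟨(n, 3), hmem _ (by omega) (by omega) _, ?_⟩
      rw [hF3]; simp only [hf, he]; split_ifs <;> omega
    by_cases h8 : q ≤ 6 * m - 2
    · refine ⟨(2 * q + 2 - 10 * m, 3), hmem _ (by omega) (by omega) _, ?_⟩
      rw [hF3]; simp only [hf, he]; split_ifs <;> omega
    by_cases h9 : q ≤ 7 * m - 3
    · refine ⟨(14 * m - 5 - 2 * q, 2), hmem _ (by omega) (by omega) _, ?_⟩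
      rw [hF2]; simp only [he]; split_ifs <;> omega
    · refine ⟨(2 * q + 5 - 14 * m, 3), hmem _ (by omega) (by omega) _, ?_⟩
      rw [hF3]; simp only [hf, he]; split_ifs <;> omega
  have hcard : S.card ≤ (Finset.Icc 1 (4 * n)).card := by
    simp only [hS, Finset.card_product, Nat.card_Icc, Finset.card_univ, Fintype.card_fin]
    omega
  refine ⟨c, d, e, f, ⟨fun p _ => ⟨rfl, rfl⟩, ?_, ?_, ?_⟩, ?_⟩
  · -- MapsTo
    intro a ha
    exact Finset.mem_coe.mpr (hmaps a (Finset.mem_coe.mp ha))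
  · -- InjOn
    intro a ha b hb hab
    exact Finset.inj_on_of_surj_on_of_card_le (fun a _ => F a) (fun a ha => hmaps a ha)
      (fun b hb => (hsurj b hb).imp fun a ⟨ha, hb'⟩ => ⟨ha, hb'⟩) hcard
      (Finset.mem_coe.mp ha) (Finset.mem_coe.mp hb) hab
  · -- SurjOn
    intro b hb
    obtain ⟨a, ha, rfl⟩ := hsurj b (Finset.mem_coe.mp hb)
    exact ⟨a, Finset.mem_coe.mpr ha, rfl⟩
  · -- right endpoints
    intro p hp
    simp only [Finset.mem_Icc] at hp
    constructor
    · simp only [hd, hc]; split_ifs <;> omega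
    · simp only [hf, he]; split_ifs <;> omega
end

section
/- For every even integer n ≥ 2, there exists a two-fold Skolem sequence of order n all of whose right endpoints lie in positions greater than or equal to (n+2)/2. -/
/-- First start position of a pair of difference `p` (order `n = 2m`). -/
def tfc (m p : ℕ) : ℕ :=
  if p % 2 = 1 then 5 * m - (p - 1) / 2 else if p = 2 * m then m else m - p / 2

/-- Second start position of a pair of difference `p` (order `n = 2m`). -/
def tfe (m p : ℕ) : ℕ :=
  if p % 2 = 1 then 7 * m - (p - 1) / 2 else 3 * m - p / 2

lemma tf_bounds (m p : ℕ) (hm : 1 ≤ m) (hp1 : 1 ≤ p) (hp2 : p ≤ 2 * m) :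
    1 ≤ tfc m p ∧ tfc m p + p ≤ 8 * m ∧ 1 ≤ tfe m p ∧ tfe m p + p ≤ 8 * m := by
  unfold tfc tfe
  split_ifs <;> omega

lemma tf_surj (m y : ℕ) (hm : 1 ≤ m) (hy1 : 1 ≤ y) (hy2 : y ≤ 8 * m) :
    ∃ p, 1 ≤ p ∧ p ≤ 2 * m ∧
      (tfc m p = y ∨ tfc m p + p = y ∨ tfe m p = y ∨ tfe m p + p = y) := by
  rcases le_or_gt y (m - 1) with h | h
  · exact ⟨2 * (m - y), by omega, by omega,
      Or.inl (by unfold tfc; split_ifs <;> omega)⟩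
  rcases le_or_gt y m with h2 | h2
  · exact ⟨2 * m, by omega, by omega,
      Or.inl (by unfold tfc; split_ifs <;> omega)⟩
  rcases le_or_gt y (2 * m - 1) with h3 | h3
  · exact ⟨2 * (y - m), by omega, by omega,
      Or.inr <| Or.inl (by unfold tfc; split_ifs <;> omega)⟩
  rcases le_or_gt y (3 * m - 1) with h4 | h4
  · exact ⟨2 * (3 * m - y), by omega, by omega,
      Or.inr <| Or.inr <| Or.inl (by unfold tfe; split_ifs <;> omega)⟩
  rcases le_or_gt y (3 * m) with h5 | h5
  · exact ⟨2 * m, by omega, by omega,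
      Or.inr <| Or.inl (by unfold tfc; split_ifs <;> omega)⟩
  rcases le_or_gt y (4 * m) with h6 | h6
  · exact ⟨2 * (y - 3 * m), by omega, by omega,
      Or.inr <| Or.inr <| Or.inr (by unfold tfe; split_ifs <;> omega)⟩
  rcases le_or_gt y (5 * m) with h7 | h7
  · exact ⟨2 * (5 * m - y) + 1, by omega, by omega,
      Or.inl (by unfold tfc; split_ifs <;> omega)⟩
  rcases le_or_gt y (6 * m) with h8 | h8
  · exact ⟨2 * (y - 5 * m) - 1, by omega, by omega,
      Or.inr <| Or.inl (by unfold tfc; split_ifs <;> omega)⟩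
  rcases le_or_gt y (7 * m) with h9 | h9
  · exact ⟨2 * (7 * m - y) + 1, by omega, by omega,
      Or.inr <| Or.inr <| Or.inl (by unfold tfe; split_ifs <;> omega)⟩
  · exact ⟨2 * (y - 7 * m) - 1, by omega, by omega,
      Or.inr <| Or.inr <| Or.inr (by unfold tfe; split_ifs <;> omega)⟩

lemma tf_mem (m : ℕ) (hm : 1 ≤ m) (q : ℕ × Fin 4)
    (hq : q ∈ Finset.Icc 1 (2 * m) ×ˢ (Finset.univ : Finset (Fin 4))) :
    (fun q : ℕ × Fin 4 => ![tfc m, fun p => tfc m p + p, tfe m,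
      fun p => tfe m p + p] q.2 q.1) q ∈ Finset.Icc 1 (4 * (2 * m)) := by
  obtain ⟨p, s⟩ := q
  have hp := Finset.mem_Icc.mp (Finset.mem_product.mp hq).1
  have hb := tf_bounds m p hm hp.1 hp.2
  rw [Finset.mem_Icc]
  fin_cases s
  · exact ⟨hb.1, show tfc m p ≤ 4 * (2 * m) by omega⟩
  · exact ⟨show 1 ≤ tfc m p + p by omega, show tfc m p + p ≤ 4 * (2 * m) by omega⟩
  · exact ⟨hb.2.2.1, show tfe m p ≤ 4 * (2 * m) by omega⟩
  · exact ⟨show 1 ≤ tfe m p + p by omega, show tfe m p + p ≤ 4 * (2 * m) by omega⟩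

lemma tf_surj' (m : ℕ) (hm : 1 ≤ m) (y : ℕ) (hy : y ∈ Finset.Icc 1 (4 * (2 * m))) :
    ∃ q ∈ Finset.Icc 1 (2 * m) ×ˢ (Finset.univ : Finset (Fin 4)),
      (fun q : ℕ × Fin 4 => ![tfc m, fun p => tfc m p + p, tfe m,
        fun p => tfe m p + p] q.2 q.1) q = y := by
  rw [Finset.mem_Icc] at hy
  obtain ⟨p, hp1, hp2, hc⟩ := tf_surj m y hm hy.1 (by omega)
  have hmem : ∀ s : Fin 4, ((p, s) : ℕ × Fin 4) ∈
      Finset.Icc 1 (2 * m) ×ˢ (Finset.univ : Finset (Fin 4)) := fun s =>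
    Finset.mem_product.mpr ⟨Finset.mem_Icc.mpr ⟨hp1, hp2⟩, Finset.mem_univ _⟩
  rcases hc with h | h | h | h
  · exact ⟨(p, 0), hmem 0, h⟩
  · exact ⟨(p, 1), hmem 1, h⟩
  · exact ⟨(p, 2), hmem 2, h⟩
  · exact ⟨(p, 3), hmem 3, h⟩

/-- For every even integer `n ≥ 2`, there exists a two-fold Skolem sequence of order `n`
(with `H = {1, …, n}` and positions `{1, …, 4n}`) all of whose right endpoints lie in
positions `≥ (n+2)/2`. -/
theorem twofold_skolem_even_right_endpoints (n : ℕ) (hn : 2 ≤ n) (heven : Even n) :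
    ∃ c d e f : ℕ → ℕ,
      IsTwoFoldSkolemTypeOn (Finset.Icc 1 n) (Finset.Icc 1 (4 * n)) c d e f ∧
      ∀ p ∈ Finset.Icc 1 n, (n + 2) / 2 ≤ d p ∧ (n + 2) / 2 ≤ f p := by
  obtain ⟨m, hnm⟩ : ∃ m, n = 2 * m := by
    obtain ⟨k, hk⟩ := heven; exact ⟨k, by omega⟩
  subst hnm
  have hm : 1 ≤ m := by omega
  refine ⟨tfc m, fun p => tfc m p + p, tfe m, fun p => tfe m p + p,
    ⟨fun p _ => ⟨rfl, rfl⟩, ?_, ?_, ?_⟩, ?_⟩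
  · -- MapsTo
    intro q hq
    exact Finset.mem_coe.mpr (tf_mem m hm q (Finset.mem_coe.mp hq))
  · -- InjOn
    have hcard : (Finset.Icc 1 (2 * m) ×ˢ (Finset.univ : Finset (Fin 4))).card ≤
        (Finset.Icc 1 (4 * (2 * m))).card := by
      simp only [Finset.card_product, Finset.card_univ, Fintype.card_fin, Nat.card_Icc]
      omega
    intro q1 hq1 q2 hq2 heq
    exact Finset.inj_on_of_surj_on_of_card_le
      (fun q _ => (fun q : ℕ × Fin 4 => ![tfc m, fun p => tfc m p + p, tfe m,
        fun p => tfe m p + p] q.2 q.1) q)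
      (fun a ha => tf_mem m hm a ha)
      (fun b hb => by obtain ⟨a, ha, h⟩ := tf_surj' m hm b hb; exact ⟨a, ha, h⟩)
      hcard (Finset.mem_coe.mp hq1) (Finset.mem_coe.mp hq2) heq
  · -- SurjOn
    intro y hy
    obtain ⟨q, hq, h⟩ := tf_surj' m hm y (Finset.mem_coe.mp hy)
    exact ⟨q, Finset.mem_coe.mpr hq, h⟩
  · -- right endpoints
    intro p hp
    rw [Finset.mem_Icc] at hp
    constructor
    · show (2 * m + 2) / 2 ≤ tfc m p + p
      unfold tfc; split_ifs <;> omega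
    · show (2 * m + 2) / 2 ≤ tfe m p + p
      unfold tfe; split_ifs <;> omega
end

section
/- For every integer k ≥ 1, there exists a two-fold Langford sequence with defect 6k−1 and order 4k−1. -/
/-- Auxiliary function: the shifted index used to place the value `p`. -/
def tfx (k p : ℕ) : ℕ := if 8 * k - 2 ≤ p then p - (8 * k - 2) else p - (4 * k - 1)

/-- For every integer `k ≥ 1`, there exists a two-fold Langford sequence with defect
`6k − 1` and order `4k − 1`: a two-fold Skolem-type sequence with
`H = {6k − 1, …, 10k − 3}` and positions `{1, …, 4(4k − 1)}`. -/
theorem twofold_langford_exists (k : ℕ) (hk : 1 ≤ k) :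
    ∃ c d e f : ℕ → ℕ,
      IsTwoFoldSkolemTypeOn (Finset.Icc (6 * k - 1) (10 * k - 3))
        (Finset.Icc 1 (4 * (4 * k - 1))) c d e f := by
  refine ⟨fun p => tfx k p + 1, fun p => tfx k p + 1 + p,
    fun p => tfx k p + 4 * k, fun p => tfx k p + 4 * k + p, fun p _ => ⟨rfl, rfl⟩, ?_, ?_, ?_⟩
  · -- MapsTo
    rintro ⟨p, i⟩ hq
    simp only [Finset.coe_product, Set.mem_prod, Finset.mem_coe, Finset.mem_Icc] at hq
    obtain ⟨⟨hp1, hp2⟩, -⟩ := hq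
    fin_cases i <;>
      simp [tfx, Finset.mem_Icc] <;>
      split_ifs <;> omega
  · -- InjOn
    rintro ⟨p, i⟩ hq ⟨p', i'⟩ hq' hEq
    simp only [Finset.coe_product, Set.mem_prod, Finset.mem_coe, Finset.mem_Icc] at hq hq'
    obtain ⟨⟨hp1, hp2⟩, -⟩ := hq
    obtain ⟨⟨hp1', hp2'⟩, -⟩ := hq'
    have H1 : (8 * k - 2 ≤ p ∧ tfx k p = p - (8 * k - 2)) ∨
        (p < 8 * k - 2 ∧ tfx k p = p - (4 * k - 1)) := by
      unfold tfx; split_ifs with h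
      exacts [Or.inl ⟨h, rfl⟩, Or.inr ⟨by omega, rfl⟩]
    have H2 : (8 * k - 2 ≤ p' ∧ tfx k p' = p' - (8 * k - 2)) ∨
        (p' < 8 * k - 2 ∧ tfx k p' = p' - (4 * k - 1)) := by
      unfold tfx; split_ifs with h
      exacts [Or.inl ⟨h, rfl⟩, Or.inr ⟨by omega, rfl⟩]
    rcases H1 with ⟨ha1, hb1⟩ | ⟨ha1, hb1⟩ <;> rcases H2 with ⟨ha2, hb2⟩ | ⟨ha2, hb2⟩ <;>
      fin_cases i <;> fin_cases i' <;>
      simp only [] at hEq <;> simp at hEq <;>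
      first
        | exact absurd hEq (by omega)
        | (simp only [Prod.mk.injEq]; exact ⟨by omega, trivial⟩)
  · -- SurjOn
    intro m hm
    simp only [Finset.mem_coe, Finset.mem_Icc] at hm
    obtain ⟨hm1, hm2⟩ := hm
    by_cases h1 : m ≤ 4 * k - 1
    · by_cases h2 : m ≤ 2 * k
      · refine ?_
        refine ⟨(m + 8 * k - 3, (0 : Fin 4)), ?_, ?_⟩
        · simp only [Finset.coe_product, Set.mem_prod, Finset.mem_coe, Finset.mem_Icc]
          exact ⟨⟨by omega, by omega⟩, Finset.mem_univ _⟩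
        · simp only [Matrix.cons_val_zero, Matrix.cons_val_one, Matrix.head_cons,
            Matrix.cons_val_two, Matrix.tail_cons, Matrix.cons_val_three]
          unfold tfx; split_ifs <;> omega
      · refine ?_
        refine ⟨(m + 4 * k - 2, (0 : Fin 4)), ?_, ?_⟩
        · simp only [Finset.coe_product, Set.mem_prod, Finset.mem_coe, Finset.mem_Icc]
          exact ⟨⟨by omega, by omega⟩, Finset.mem_univ _⟩
        · simp only [Matrix.cons_val_zero, Matrix.cons_val_one, Matrix.head_cons,
            Matrix.cons_val_two, Matrix.tail_cons, Matrix.cons_val_three]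
          unfold tfx; split_ifs <;> omega
    · by_cases h2 : m ≤ 8 * k - 2
      · by_cases h3 : m ≤ 6 * k - 1
        · refine ?_
          refine ⟨(m + 4 * k - 2, (2 : Fin 4)), ?_, ?_⟩
          · simp only [Finset.coe_product, Set.mem_prod, Finset.mem_coe, Finset.mem_Icc]
            exact ⟨⟨by omega, by omega⟩, Finset.mem_univ _⟩
          · simp only [Matrix.cons_val_zero, Matrix.cons_val_one, Matrix.head_cons,
              Matrix.cons_val_two, Matrix.tail_cons, Matrix.cons_val_three]
            unfold tfx; split_ifs <;> omega
        · refine ?_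
          refine ⟨(m - 1, (2 : Fin 4)), ?_, ?_⟩
          · simp only [Finset.coe_product, Set.mem_prod, Finset.mem_coe, Finset.mem_Icc]
            exact ⟨⟨by omega, by omega⟩, Finset.mem_univ _⟩
          · simp only [Matrix.cons_val_zero, Matrix.cons_val_one, Matrix.head_cons,
              Matrix.cons_val_two, Matrix.tail_cons, Matrix.cons_val_three]
            unfold tfx; split_ifs <;> omega
      · by_cases h3 : m ≤ 12 * k - 3
        · by_cases h4 : m % 2 = 1
          · refine ?_
            refine ⟨((m + 8 * k - 3) / 2, (1 : Fin 4)), ?_, ?_⟩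
            · simp only [Finset.coe_product, Set.mem_prod, Finset.mem_coe, Finset.mem_Icc]
              exact ⟨⟨by omega, by omega⟩, Finset.mem_univ _⟩
            · simp only [Matrix.cons_val_zero, Matrix.cons_val_one, Matrix.head_cons,
                Matrix.cons_val_two, Matrix.tail_cons, Matrix.cons_val_three]
              unfold tfx; split_ifs <;> omega
          · refine ?_
            refine ⟨((m + 4 * k - 2) / 2, (1 : Fin 4)), ?_, ?_⟩
            · simp only [Finset.coe_product, Set.mem_prod, Finset.mem_coe, Finset.mem_Icc]
              exact ⟨⟨by omega, by omega⟩, Finset.mem_univ _⟩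
            · simp only [Matrix.cons_val_zero, Matrix.cons_val_one, Matrix.head_cons,
                Matrix.cons_val_two, Matrix.tail_cons, Matrix.cons_val_three]
              unfold tfx; split_ifs <;> omega
        · by_cases h4 : m % 2 = 0
          · refine ?_
            refine ⟨((m + 4 * k - 2) / 2, (3 : Fin 4)), ?_, ?_⟩
            · simp only [Finset.coe_product, Set.mem_prod, Finset.mem_coe, Finset.mem_Icc]
              exact ⟨⟨by omega, by omega⟩, Finset.mem_univ _⟩
            · simp only [Matrix.cons_val_zero, Matrix.cons_val_one, Matrix.head_cons,
                Matrix.cons_val_two, Matrix.tail_cons, Matrix.cons_val_three]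
              unfold tfx; split_ifs <;> omega
          · refine ?_
            refine ⟨((m - 1) / 2, (3 : Fin 4)), ?_, ?_⟩
            · simp only [Finset.coe_product, Set.mem_prod, Finset.mem_coe, Finset.mem_Icc]
              exact ⟨⟨by omega, by omega⟩, Finset.mem_univ _⟩
            · simp only [Matrix.cons_val_zero, Matrix.cons_val_one, Matrix.head_cons,
                Matrix.cons_val_two, Matrix.tail_cons, Matrix.cons_val_three]
              unfold tfx; split_ifs <;> omega
end

section
/- Let (a_i, b_i), i = 1, ..., t, be the pairs of a Skolem sequence of order t, and let c ≥ t be a positive integer. Then the values appearing among the triples (0, i, b_i + c), 1 ≤ i ≤ t, are all distinct apart from 0 and lie in {0} ∪ {1,...,t} ∪ {c+2,...,c+2t}, and the multiset of induced differences {i : 1 ≤ i ≤ t} ∪ {(b_i + c) − i : 1 ≤ i ≤ t} ∪ {b_i + c : 1 ≤ i ≤ t} is exactly the set {1,...,t} ∪ {c+1,...,c+2t}, each element occurring exactly once. -/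
/-!
Since `bᵢ = aᵢ + i ≥ 2` and `i ≤ t ≤ c`, the labels `i` and `bᵢ + c` cannot collide, and
`bᵢ + c` lies in `{c+2, …, c+2t}`. For the differences, `(bᵢ + c) − i = aᵢ + c`, so the last two
families are the Skolem entries `{aᵢ} ∪ {bᵢ} = {1, …, 2t}` shifted by `c`, i.e. `{c+1, …, c+2t}`.
-/

open Finset

theorem Set.BijOn.map_add_map_eq {ι α : Type*} {s : Finset ι} {T : Finset α} {f g : ι → α}
    (h : Set.BijOn (fun p : ι × Bool => if p.2 then g p.1 else f p.1)
      ↑(s ×ˢ (Finset.univ : Finset Bool)) ↑T) :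
    s.val.map f + s.val.map g = T.val := by
  classical
  have hT : (s ×ˢ Finset.univ).image (fun p : ι × Bool => if p.2 then g p.1 else f p.1) = T := by
    exact_mod_cast h.image_eq
  have huniv : (Finset.univ : Finset Bool).val = false ::ₘ true ::ₘ 0 := by decide
  rw [← hT, image_val_of_injOn h.injOn, product_val, huniv, Multiset.product_cons,
    Multiset.product_cons, Multiset.product_zero, add_zero, Multiset.map_add, Multiset.map_map,
    Multiset.map_map]
  rfl

theorem Set.injOn_ite_prod_bool {ι : Type*} {s : Finset ι} {g : ι → ι} (hg : Set.InjOn g s)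
    (hdisj : ∀ i ∈ s, ∀ j ∈ s, i ≠ g j) :
    Set.InjOn (fun p : ι × Bool => if p.2 then g p.1 else p.1)
      ↑(s ×ˢ (Finset.univ : Finset Bool)) := by
  rintro ⟨i, u⟩ hi ⟨j, v⟩ hj hij
  simp only [mem_coe, mem_product, Finset.mem_univ, and_true] at hi hj
  cases u <;> cases v <;> simp only [Bool.false_eq_true, if_false, if_true] at hij
  · rw [hij]
  · exact absurd hij (hdisj i hi j hj)
  · exact absurd hij.symm (hdisj j hj i hi)
  · rw [hg hi hj hij]

theorem Finset.Icc_one_val_map_add (n c : ℕ) :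
    (Icc 1 n).val.map (· + c) = (Icc (c + 1) (c + n)).val := by
  rw [add_comm c 1, add_comm c n, ← map_add_right_Icc, map_val]
  rfl

section Skolem

variable {t : ℕ} {a b : ℕ → ℕ}
  (hpart : Set.BijOn (fun p : ℕ × Bool => if p.2 then b p.1 else a p.1)
    ↑((Icc 1 t) ×ˢ (univ : Finset Bool)) ↑(Icc 1 (2 * t)))
include hpart

theorem skolem_injOn_snd : Set.InjOn b (Icc 1 t) := fun i hi j hj hij =>
  congrArg Prod.fst (hpart.injOn (by simpa using hi) (by simpa using hj) (by simpa using hij) :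
    ((i, true) : ℕ × Bool) = (j, true))

theorem skolem_snd_mem_Icc (hab : ∀ i ∈ Icc 1 t, b i = a i + i) {i : ℕ} (hi : i ∈ Icc 1 t) :
    b i ∈ Icc 2 (2 * t) := by
  have hmem (v : Bool) : (i, v) ∈ (↑((Icc 1 t) ×ˢ (univ : Finset Bool)) : Set (ℕ × Bool)) :=
    mem_coe.2 (mem_product.2 ⟨hi, mem_univ v⟩)
  have ha : a i ∈ Icc 1 (2 * t) := hpart.mapsTo (hmem false)
  have hb : b i ∈ Icc 1 (2 * t) := hpart.mapsTo (hmem true)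
  simp only [mem_Icc] at ha hb hi ⊢
  have := hab i (mem_Icc.2 hi)
  omega

end Skolem

theorem skolem_triple_labels'_general (t c : ℕ) (a b : ℕ → ℕ) (htc : t ≤ c)
    (hab : ∀ i ∈ Finset.Icc 1 t, b i = a i + i)
    (hpart : Set.BijOn (fun p : ℕ × Bool => if p.2 then b p.1 else a p.1)
      ↑((Finset.Icc 1 t) ×ˢ (Finset.univ : Finset Bool)) ↑(Finset.Icc 1 (2 * t))) :
    (Set.InjOn (fun p : ℕ × Bool => if p.2 then b p.1 + c else p.1)
        ↑((Finset.Icc 1 t) ×ˢ (Finset.univ : Finset Bool)) ∧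
      Set.MapsTo (fun p : ℕ × Bool => if p.2 then b p.1 + c else p.1)
        ↑((Finset.Icc 1 t) ×ˢ (Finset.univ : Finset Bool))
        ↑(Finset.Icc 1 t ∪ Finset.Icc (c + 2) (c + 2 * t))) ∧
    (Finset.Icc 1 t).val.map (fun i => i) +
      (Finset.Icc 1 t).val.map (fun i => b i + c - i) +
      (Finset.Icc 1 t).val.map (fun i => b i + c) =
      (Finset.Icc 1 t ∪ Finset.Icc (c + 1) (c + 2 * t)).val := by
  have hb (i) (hi : i ∈ Icc 1 t) := mem_Icc.1 (skolem_snd_mem_Icc hpart hab hi)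
  have ht (i) (hi : i ∈ Icc 1 t) := (mem_Icc.1 hi).2
  refine ⟨⟨?_, ?_⟩, ?_⟩
  · refine Set.injOn_ite_prod_bool (fun i hi j hj hij => skolem_injOn_snd hpart hi hj
      (add_right_cancel hij)) fun i hi j hj => ?_
    have := ht i hi; have := hb j hj
    omega
  · rintro ⟨i, v⟩ hi
    simp only [mem_coe, mem_product, Finset.mem_univ, and_true] at hi
    have := hb i hi
    cases v
    · exact mem_union_left _ hi
    · exact mem_union_right _ (mem_Icc.2 (by simp only [if_true]; omega))
  · have hshift : (Icc 1 t).val.map (fun i => b i + c - i) = (Icc 1 t).val.map (a · + c) :=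
      Multiset.map_congr rfl fun i hi => by have := hab i hi; omega
    have hdisj : Disjoint (Icc 1 t) (Icc (c + 1) (c + 2 * t)) :=
      disjoint_left.2 fun x hx hy => by simp only [mem_Icc] at hx hy; omega
    rw [← disjUnion_eq_union _ _ hdisj, disjUnion_val, Multiset.map_id', hshift, add_assoc,
      ← Finset.Icc_one_val_map_add, ← hpart.map_add_map_eq, Multiset.map_add,
      Multiset.map_map, Multiset.map_map]
    rfl

/-- Let `(aᵢ, bᵢ)`, `i = 1, …, t`, be the pairs of a Skolem sequence of order `t`
(so `bᵢ = aᵢ + i` and the entries partition `{1, …, 2t}`), and let `c ≥ t` be a positive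
integer.  Then the nonzero values appearing among the triples `(0, i, bᵢ + c)` are all
distinct and lie in `{1, …, t} ∪ {c+2, …, c+2t}`, and the multiset of induced differences
`{i} ∪ {(bᵢ + c) − i} ∪ {bᵢ + c}` is exactly `{1, …, t} ∪ {c+1, …, c+2t}`, each element
occurring exactly once. -/
theorem skolem_triple_labels' (t c : ℕ) (a b : ℕ → ℕ) (hc : 1 ≤ c) (htc : t ≤ c)
    (hab : ∀ i ∈ Finset.Icc 1 t, b i = a i + i)
    (hpart : Set.BijOn (fun p : ℕ × Bool => if p.2 then b p.1 else a p.1)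
      ↑((Finset.Icc 1 t) ×ˢ (Finset.univ : Finset Bool)) ↑(Finset.Icc 1 (2 * t))) :
    (Set.InjOn (fun p : ℕ × Bool => if p.2 then b p.1 + c else p.1)
        ↑((Finset.Icc 1 t) ×ˢ (Finset.univ : Finset Bool)) ∧
      Set.MapsTo (fun p : ℕ × Bool => if p.2 then b p.1 + c else p.1)
        ↑((Finset.Icc 1 t) ×ˢ (Finset.univ : Finset Bool))
        ↑(Finset.Icc 1 t ∪ Finset.Icc (c + 2) (c + 2 * t))) ∧
    (Finset.Icc 1 t).val.map (fun i => i) +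
      (Finset.Icc 1 t).val.map (fun i => b i + c - i) +
      (Finset.Icc 1 t).val.map (fun i => b i + c) =
      (Finset.Icc 1 t ∪ Finset.Icc (c + 1) (c + 2 * t)).val :=
  skolem_triple_labels'_general t c a b htc hab hpart
end

section
/- Let (c_j, d_j) and (e_j, f_j), j = 1, ..., s, be the two pairs of positions of j in a two-fold Skolem sequence of order s (so d_j − c_j = f_j − e_j = j and the entries c_j, d_j, e_j, f_j over all j partition {1,...,4s}), and let c ≥ s − 1 be a positive integer. Then the values appearing in the quadruples (0, d_j + c, j, f_j + c), 1 ≤ j ≤ s, are all distinct apart from 0 and lie in {0} ∪ {1,...,s} ∪ {c+2,...,c+4s}, and the multiset of induced differences {d_j + c : j} ∪ {(d_j + c) − j : j} ∪ {(f_j + c) − j : j} ∪ {f_j + c : j} is exactly the set {c+1, c+2, ..., c+4s}, each element occurring exactly once. -/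
/-- Let `(cⱼ, dⱼ)` and `(eⱼ, fⱼ)`, `j = 1, …, s`, be the two pairs of positions of `j` in
a two-fold Skolem sequence of order `s` (so `dⱼ = cⱼ + j`, `fⱼ = eⱼ + j`, and all the
entries partition `{1, …, 4s}`), and let `c ≥ s − 1` be a positive integer.  Then the
nonzero values appearing in the quadruples `(0, dⱼ + c, j, fⱼ + c)` are all distinct and
lie in `{1, …, s} ∪ {c+2, …, c+4s}`, and the multiset of induced differences
`{dⱼ + c} ∪ {(dⱼ + c) − j} ∪ {(fⱼ + c) − j} ∪ {fⱼ + c}` is exactly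
`{c+1, …, c+4s}`, each element occurring exactly once. -/
theorem twofold_skolem_quadruple_labels (s c : ℕ) (cc dd ee ff : ℕ → ℕ)
    (hc : 1 ≤ c) (hsc : s ≤ c + 1)
    (hpairs : ∀ j ∈ Finset.Icc 1 s, dd j = cc j + j ∧ ff j = ee j + j)
    (hpart : Set.BijOn (fun q : ℕ × Fin 4 => ![cc, dd, ee, ff] q.2 q.1)
      ↑((Finset.Icc 1 s) ×ˢ (Finset.univ : Finset (Fin 4))) ↑(Finset.Icc 1 (4 * s))) :
    (Set.InjOn
        (fun q : ℕ × Fin 3 =>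
          ![fun j => dd j + c, fun j => j, fun j => ff j + c] q.2 q.1)
        ↑((Finset.Icc 1 s) ×ˢ (Finset.univ : Finset (Fin 3))) ∧
      Set.MapsTo
        (fun q : ℕ × Fin 3 =>
          ![fun j => dd j + c, fun j => j, fun j => ff j + c] q.2 q.1)
        ↑((Finset.Icc 1 s) ×ˢ (Finset.univ : Finset (Fin 3)))
        ↑(Finset.Icc 1 s ∪ Finset.Icc (c + 2) (c + 4 * s))) ∧
    (Finset.Icc 1 s).val.map (fun j => dd j + c) +
      (Finset.Icc 1 s).val.map (fun j => dd j + c - j) +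
      (Finset.Icc 1 s).val.map (fun j => ff j + c - j) +
      (Finset.Icc 1 s).val.map (fun j => ff j + c) =
      (Finset.Icc (c + 1) (c + 4 * s)).val := by
  have hmem : ∀ j ∈ Finset.Icc 1 s, ∀ i : Fin 4,
      1 ≤ ![cc, dd, ee, ff] i j ∧ ![cc, dd, ee, ff] i j ≤ 4 * s := by
    intro j hj i
    have h := Finset.mem_coe.mpr (Finset.mem_product.mpr
      ⟨hj, Finset.mem_univ i⟩ : ((j, i) : ℕ × Fin 4) ∈ (Finset.Icc 1 s) ×ˢ Finset.univ)
    have := hpart.mapsTo h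
    simpa using this
  have key : ∀ j ∈ Finset.Icc 1 s, ∀ j' ∈ Finset.Icc 1 s, ∀ i i' : Fin 4,
      ![cc, dd, ee, ff] i j = ![cc, dd, ee, ff] i' j' → j = j' ∧ i = i' := by
    intro j hj j' hj' i i' h
    have h1 := Finset.mem_coe.mpr (Finset.mem_product.mpr
      ⟨hj, Finset.mem_univ i⟩ : ((j, i) : ℕ × Fin 4) ∈ (Finset.Icc 1 s) ×ˢ Finset.univ)
    have h2 := Finset.mem_coe.mpr (Finset.mem_product.mpr
      ⟨hj', Finset.mem_univ i'⟩ : ((j', i') : ℕ × Fin 4) ∈ (Finset.Icc 1 s) ×ˢ Finset.univ)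
    have := hpart.injOn h1 h2 h
    exact ⟨congrArg Prod.fst this, congrArg Prod.snd this⟩
  have hdd2 : ∀ j ∈ Finset.Icc 1 s, 2 ≤ dd j ∧ dd j ≤ 4 * s := by
    intro j hj
    have h1 := (hmem j hj 0).1
    have h2 := hmem j hj 1
    have h3 := (hpairs j hj).1
    have hj1 : 1 ≤ j := (Finset.mem_Icc.mp hj).1
    simp at h1 h2
    omega
  have hff2 : ∀ j ∈ Finset.Icc 1 s, 2 ≤ ff j ∧ ff j ≤ 4 * s := by
    intro j hj
    have h1 := (hmem j hj 2).1
    have h2 := hmem j hj 3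
    have h3 := (hpairs j hj).2
    have hj1 : 1 ≤ j := (Finset.mem_Icc.mp hj).1
    simp at h1 h2
    omega
  refine ⟨⟨?_, ?_⟩, ?_⟩
  · -- InjOn
    rintro ⟨j, i⟩ h1 ⟨j', i'⟩ h2 heq
    simp only [Finset.coe_product, Set.mem_prod, Finset.mem_coe, Finset.coe_univ,
      Set.mem_univ, and_true] at h1 h2
    have hj1 : 1 ≤ j ∧ j ≤ s := Finset.mem_Icc.mp h1
    have hj2 : 1 ≤ j' ∧ j' ≤ s := Finset.mem_Icc.mp h2
    have Hd := hdd2 j h1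
    have Hd' := hdd2 j' h2
    have Hf := hff2 j h1
    have Hf' := hff2 j' h2
    fin_cases i <;> fin_cases i' <;> simp at heq ⊢
    · -- dd dd
      exact (key j h1 j' h2 1 1 (by simp; omega)).1
    · omega
    · -- dd ff
      have := (key j h1 j' h2 1 3 (by simp; omega)).2
      simp at this
    · omega
    · exact heq
    · omega
    · -- ff dd
      have := (key j h1 j' h2 3 1 (by simp; omega)).2
      simp at this
    · omega
    · -- ff ff
      exact (key j h1 j' h2 3 3 (by simp; omega)).1
  · -- MapsTo
    rintro ⟨j, i⟩ h1
    simp only [Finset.coe_product, Set.mem_prod, Finset.mem_coe, Finset.coe_univ,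
      Set.mem_univ, and_true] at h1
    have hj1 : 1 ≤ j ∧ j ≤ s := Finset.mem_Icc.mp h1
    have Hd := hdd2 j h1
    have Hf := hff2 j h1
    fin_cases i <;> simp [Finset.mem_Icc] <;> omega
  · -- multiset equality
    have hval : (((Finset.Icc 1 s) ×ˢ (Finset.univ : Finset (Fin 4))).val.map
        (fun q : ℕ × Fin 4 => ![cc, dd, ee, ff] q.2 q.1)) = (Finset.Icc 1 (4 * s)).val := by
      have himg : Finset.image (fun q : ℕ × Fin 4 => ![cc, dd, ee, ff] q.2 q.1)
          ((Finset.Icc 1 s) ×ˢ Finset.univ) = Finset.Icc 1 (4 * s) := by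
        apply Finset.coe_injective
        rw [Finset.coe_image]
        exact hpart.image_eq
      rw [← Finset.image_val_of_injOn hpart.injOn, himg]
    have hms : ∀ {α : Type} (T : Finset α) (F : α → ℕ),
        T.val.map F = ∑ q ∈ T, ({F q} : Multiset ℕ) := by
      intro α T F
      rw [Finset.sum_eq_multiset_sum,
        show (fun q => ({F q} : Multiset ℕ)) = (fun x => ({x} : Multiset ℕ)) ∘ F from rfl,
        ← Multiset.map_map, Multiset.sum_map_singleton]
    have hdecomp : (((Finset.Icc 1 s) ×ˢ (Finset.univ : Finset (Fin 4))).val.map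
        (fun q : ℕ × Fin 4 => ![cc, dd, ee, ff] q.2 q.1))
        = (Finset.Icc 1 s).val.map cc + (Finset.Icc 1 s).val.map dd
          + (Finset.Icc 1 s).val.map ee + (Finset.Icc 1 s).val.map ff := by
      rw [hms, Finset.sum_product]
      simp only [Fin.sum_univ_four, Matrix.cons_val_zero, Matrix.cons_val_one,
        Matrix.head_cons, Matrix.cons_val_two, Matrix.tail_cons, Matrix.cons_val_three,
        Matrix.cons_val_fin_one]
      rw [Finset.sum_add_distrib, Finset.sum_add_distrib, Finset.sum_add_distrib]
      rw [hms _ cc, hms _ dd, hms _ ee, hms _ ff]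
    have hsum : (Finset.Icc 1 s).val.map cc + (Finset.Icc 1 s).val.map dd
        + (Finset.Icc 1 s).val.map ee + (Finset.Icc 1 s).val.map ff
        = (Finset.Icc 1 (4 * s)).val := by rw [← hdecomp, hval]
    have e1 : (Finset.Icc 1 s).val.map (fun j => dd j + c - j)
        = (Finset.Icc 1 s).val.map (fun j => cc j + c) := by
      apply Multiset.map_congr rfl
      intro j hj
      have := (hpairs j hj).1
      omega
    have e2 : (Finset.Icc 1 s).val.map (fun j => ff j + c - j)
        = (Finset.Icc 1 s).val.map (fun j => ee j + c) := by
      apply Multiset.map_congr rfl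
      intro j hj
      have := (hpairs j hj).2
      omega
    rw [e1, e2]
    have hshift : ∀ g : ℕ → ℕ, (Finset.Icc 1 s).val.map (fun j => g j + c)
        = ((Finset.Icc 1 s).val.map g).map (fun x => x + c) := by
      intro g; rw [Multiset.map_map]; rfl
    rw [hshift dd, hshift cc, hshift ee, hshift ff]
    have hIcc : (Finset.Icc (c + 1) (c + 4 * s)).val
        = ((Finset.Icc 1 (4 * s)).val).map (fun x => x + c) := by
      have h := Multiset.map_add_right_Icc (1 : ℕ) (4 * s) c
      simp only [Multiset.Icc] at h
      rw [h, show c + 1 = 1 + c from by omega, show c + 4 * s = 4 * s + c from by omega]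
    rw [hIcc, ← hsum]
    simp only [Multiset.map_add]
    abel
end

section
/- Let n, i, j, a_i, b_i, a_j, b_j be positive integers with i ≠ j, b_i − a_i = i, and b_j − a_j = j. Then the multiset of absolute differences between consecutive entries (taken cyclically) of the 6-tuple (0, b_i + n, i, i + j, j, b_j + n) equals the union of the multisets of cyclic consecutive differences of the triples (0, i, b_i + n) and (0, j, b_j + n); namely, both equal the multiset {i, j, a_i + n, b_i + n, a_j + n, b_j + n}. (Hence replacing the two triangles labelled (0, i, b_i + n) and (0, j, b_j + n) in a labelled windmill by a 6-cycle with vertex labels (0, b_i + n, i, i + j, j, b_j + n) preserves the edge labels.) -/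
/-- The multiset of absolute differences between (cyclically) consecutive entries of a
triple of labels. -/
def cyclicDiffs3 (x1 x2 x3 : ℤ) : Multiset ℕ :=
  {(x1 - x2).natAbs, (x2 - x3).natAbs, (x3 - x1).natAbs}

/-- The multiset of absolute differences between (cyclically) consecutive entries of a
6-tuple of labels. -/
def cyclicDiffs6 (x1 x2 x3 x4 x5 x6 : ℤ) : Multiset ℕ :=
  {(x1 - x2).natAbs, (x2 - x3).natAbs, (x3 - x4).natAbs,
    (x4 - x5).natAbs, (x5 - x6).natAbs, (x6 - x1).natAbs}

set_option maxHeartbeats 1000000 in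
/-- Let `n, i, j, aᵢ, bᵢ, aⱼ, bⱼ` be positive integers with `i ≠ j`, `bᵢ − aᵢ = i` and
`bⱼ − aⱼ = j`.  Then the multiset of cyclic consecutive absolute differences of the
6-tuple `(0, bᵢ + n, i, i + j, j, bⱼ + n)` equals the union of the multisets of cyclic
consecutive absolute differences of the triples `(0, i, bᵢ + n)` and `(0, j, bⱼ + n)`;
namely, both equal the multiset `{i, j, aᵢ + n, bᵢ + n, aⱼ + n, bⱼ + n}`. -/
theorem hexagon_replacement_preserves_edge_labels
    (n i j ai bi aj bj : ℕ) (hn : 1 ≤ n) (hi : 1 ≤ i) (hj : 1 ≤ j)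
    (hai : 1 ≤ ai) (hbi : 1 ≤ bi) (haj : 1 ≤ aj) (hbj : 1 ≤ bj)
    (hij : i ≠ j) (hbai : bi - ai = i) (hbaj : bj - aj = j) :
    cyclicDiffs6 0 ((bi : ℤ) + n) i ((i : ℤ) + j) j ((bj : ℤ) + n) =
      cyclicDiffs3 0 i ((bi : ℤ) + n) + cyclicDiffs3 0 j ((bj : ℤ) + n) ∧
    cyclicDiffs6 0 ((bi : ℤ) + n) i ((i : ℤ) + j) j ((bj : ℤ) + n) =
      {i, j, ai + n, bi + n, aj + n, bj + n} := by
  have hbi' : bi = ai + i := by omega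
  have hbj' : bj = aj + j := by omega
  subst hbi' hbj'
  have e1 : ((0 : ℤ) - ((ai + i : ℕ) + n)).natAbs = ai + i + n := by push_cast; omega
  have e2 : (((ai + i : ℕ) : ℤ) + n - i).natAbs = ai + n := by push_cast; omega
  have e3 : ((i : ℤ) - ((i : ℤ) + j)).natAbs = j := by push_cast; omega
  have e4 : ((i : ℤ) + j - j).natAbs = i := by push_cast; omega
  have e5 : ((j : ℤ) - ((aj + j : ℕ) + n)).natAbs = aj + n := by push_cast; omega
  have e6 : (((aj + j : ℕ) : ℤ) + n - 0).natAbs = aj + j + n := by push_cast; omega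
  have e7 : ((0 : ℤ) - i).natAbs = i := by omega
  have e8 : ((0 : ℤ) - j).natAbs = j := by omega
  simp only [cyclicDiffs6, cyclicDiffs3, e1, e2, e3, e4, e5, e6, e7, e8]
  constructor <;>
  · ext x
    simp only [Multiset.insert_eq_cons, Multiset.count_cons, Multiset.count_singleton,
      Multiset.count_add, Multiset.count_zero]
    split_ifs <;> omega
end
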